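/- arXiv:0803.0925 — 5 statements merged into one kernel-verified Lean document; each statement's English description precedes it below -/
import Mathlib

section
/- Let A = (a_1,…,a_n) ∈ (S^m)^n with n > m+1, let m+1 ≤ k < n, and write A_{k+1} := (a_1,…,a_{k+1}) ∈ (S^m)^{k+1}. If A_{k+1} is infeasible, then 𝒞(A_{k+1}) ≥ 𝒞(A), where 𝒞(A_{k+1}) is the GCC condition number computed in (S^m)^{k+1} and 𝒞(A) is computed in (S^m)^n. -/
open MeasureTheory Real Set Filter
open scoped ENNReal NNReal BigOperators RealInnerProductSpace

noncomputable section

/-- Euclidean space `ℝ^{m+1}`. -/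
abbrev Euc (m : ℕ) := EuclideanSpace ℝ (Fin (m + 1))

/-- The unit sphere `S^m ⊆ ℝ^{m+1}`. -/
def unitSphere (m : ℕ) : Set (Euc m) := Metric.sphere (0 : Euc m) 1

/-- Angular distance `d(x,y) = arccos ⟨x,y⟩` on the sphere. -/
def angdist {m : ℕ} (x y : Euc m) : ℝ := Real.arccos ⟪x, y⟫

/-- Angular distance from a point to a set: `d(x,M) = inf {d(x,y) : y ∈ M}`. -/
def angdistSet {m : ℕ} (x : Euc m) (M : Set (Euc m)) : ℝ := sInf (angdist x '' M)

/-- The spherical cap `B(a,α)` of center `a` and angular radius `α`. -/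
def cap {m : ℕ} (a : Euc m) (α : ℝ) : Set (Euc m) :=
  {x ∈ unitSphere m | angdist x a ≤ α}

/-- The projective ball `B(±a,α) = B(a,α) ∪ B(-a,α)`. -/
def projBall {m : ℕ} (a : Euc m) (α : ℝ) : Set (Euc m) := cap a α ∪ cap (-a) α

/-- Solution set on the sphere of the system `⟨a_i , x⟩ ≤ 0, i = 1,…,n`. -/
def Sol {m n : ℕ} (A : Fin n → Euc m) : Set (Euc m) :=
  {x ∈ unitSphere m | ∀ i, ⟪A i, x⟫ ≤ 0}

/-- `A` is feasible iff its solution set is nonempty. -/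
def Feasible {m n : ℕ} (A : Fin n → Euc m) : Prop := (Sol A).Nonempty

/-- `A` is strictly feasible iff its solution set has nonempty interior
relative to the sphere. -/
def StrictlyFeasible {m n : ℕ} (A : Fin n → Euc m) : Prop :=
  ∃ x ∈ Sol A, ∃ ε > (0:ℝ), ∀ y ∈ unitSphere m, dist y x < ε → y ∈ Sol A

/-- The set `Σ_{n,m}` of ill-posed instances: feasible but not strictly feasible. -/
def illPosed (m n : ℕ) : Set (Fin n → Euc m) :=
  {A | (∀ i, A i ∈ unitSphere m) ∧ Feasible A ∧ ¬ StrictlyFeasible A}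

/-- Distance `d(A,B) = max_i d(a_i,b_i)` on `(S^m)^n`. -/
def dProd {m n : ℕ} (A B : Fin n → Euc m) : ℝ := ⨆ i, angdist (A i) (B i)

/-- Distance of an instance to the set of ill-posed instances. -/
def distSigma {m n : ℕ} (A : Fin n → Euc m) : ℝ :=
  sInf (dProd A '' illPosed m n)

/-- The GCC condition number `𝒞(A) = 1 / sin d(A, Σ_{n,m})`. -/
def GCC {m n : ℕ} (A : Fin n → Euc m) : ℝ := 1 / Real.sin (distSigma A)

/-- Uniform probability distribution on the spherical cap `B(a,α)`
(normalized `m`-dimensional Hausdorff measure). -/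
def capUniform {m : ℕ} (a : Euc m) (α : ℝ) : Measure (Euc m) :=
  (μH[m] (cap a α))⁻¹ • μH[m].restrict (cap a α)

/-- Uniform probability distribution on the sphere `S^m`. -/
def sphereUniform (m : ℕ) : Measure (Euc m) :=
  (μH[m] (unitSphere m))⁻¹ • μH[m].restrict (unitSphere m)

/-- `I_k(α) = ∫_0^α (sin t)^{k-1} dt` (real exponent `k`). -/
def Ifun (k α : ℝ) : ℝ := ∫ t in (0:ℝ)..α, (Real.sin t) ^ (k - 1)

/-- Adversarial probability distribution on `B(ā,α)` with parameters `β, H`: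
a probability measure with density `f(x) = g(sin d(x,ā))` with respect to the
uniform distribution on `B(ā,α)`, where `g(r) = C·r^{-β}·h(r)`, `g` is
monotonically decreasing, `0 ≤ β < m`, `h` is continuous and nonnegative with
`h(0) ≠ 0`, `H = sup h`, and `C = I_m(α)/I_{m-β}(α)`. -/
def IsAdversarial {m : ℕ} (μ : Measure (Euc m)) (abar : Euc m) (α β H : ℝ) : Prop :=
  0 ≤ β ∧ β < m ∧ IsProbabilityMeasure μ ∧
  ∃ h : ℝ → ℝ,
    ContinuousOn h (Icc 0 (Real.sin α)) ∧
    (∀ r ∈ Icc (0:ℝ) (Real.sin α), 0 ≤ h r) ∧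
    h 0 ≠ 0 ∧
    H = sSup (h '' Icc (0:ℝ) (Real.sin α)) ∧
    AntitoneOn (fun r => Ifun m α / Ifun (m - β) α * r ^ (-β) * h r)
      (Ioc (0:ℝ) (Real.sin α)) ∧
    μ = (capUniform abar α).withDensity
      (fun x => ENNReal.ofReal (Ifun m α / Ifun (m - β) α *
        (Real.sin (angdist x abar)) ^ (-β) * h (Real.sin (angdist x abar))))

/-- Adversarial probability distribution on `B(ā,α)` with parameters `β = 0, H`:
a probability measure with radially symmetric density `g(sin d(x,ā)) ≤ H` with
respect to the uniform distribution on `B(ā,α)`, where `g` is continuous,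
monotonically decreasing, nonnegative, `g(0) ≠ 0` and `H = sup g`. -/
def IsAdversarial0 {m : ℕ} (μ : Measure (Euc m)) (abar : Euc m) (α H : ℝ) : Prop :=
  IsProbabilityMeasure μ ∧
  ∃ g : ℝ → ℝ,
    ContinuousOn g (Icc 0 (Real.sin α)) ∧
    AntitoneOn g (Icc (0:ℝ) (Real.sin α)) ∧
    (∀ r ∈ Icc (0:ℝ) (Real.sin α), 0 ≤ g r) ∧
    g 0 ≠ 0 ∧
    H = sSup (g '' Icc (0:ℝ) (Real.sin α)) ∧
    μ = (capUniform abar α).withDensity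
      (fun x => ENNReal.ofReal (g (Real.sin (angdist x abar))))

/-- Spherical convexity: for all `x,y ∈ K` with `x ≠ ±y`, the great circle
segment `cone{x,y} ∩ S^m` is contained in `K`. -/
def SphConvex {m : ℕ} (K : Set (Euc m)) : Prop :=
  ∀ x ∈ K, ∀ y ∈ K, x ≠ y → x ≠ -y → ∀ l₁ l₂ : ℝ, 0 ≤ l₁ → 0 ≤ l₂ →
    l₁ • x + l₂ • y ∈ unitSphere m → l₁ • x + l₂ • y ∈ K

/-- Properly convex: nonempty, spherically convex, and containing no pair of
antipodal points. -/
def ProperlyConvex {m : ℕ} (K : Set (Euc m)) : Prop :=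
  K.Nonempty ∧ K ⊆ unitSphere m ∧ SphConvex K ∧ ∀ x ∈ K, -x ∉ K

/-- The `φ`-neighborhood `T(M,φ) = {x ∈ S^m : d(x,M) < φ}`. -/
def nbhdT {m : ℕ} (M : Set (Euc m)) (φ : ℝ) : Set (Euc m) :=
  {x ∈ unitSphere m | angdistSet x M < φ}

/-- The closed `δ`-neighborhood `{x ∈ S^m : d(x,M) ≤ δ}`. -/
def nbhdClosed {m : ℕ} (M : Set (Euc m)) (δ : ℝ) : Set (Euc m) :=
  {x ∈ unitSphere m | angdistSet x M ≤ δ}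

/-- The boundary of `K ⊆ S^m` relative to the sphere. -/
def sphBoundary {m : ℕ} (K : Set (Euc m)) : Set (Euc m) :=
  closure K ∩ closure (unitSphere m \ K)

/-- `O_k = vol(S^k) = 2π^{(k+1)/2}/Γ((k+1)/2)` (real index `k`). -/
def sphereVolR (k : ℝ) : ℝ := 2 * Real.pi ^ ((k + 1) / 2) / Real.Gamma ((k + 1) / 2)

/-- The convex cone generated by a set `M`. -/
def coneGen {m : ℕ} (M : Set (Euc m)) : Set (Euc m) :=
  {x | ∃ (k : ℕ) (c : Fin k → ℝ) (v : Fin k → Euc m),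
    (∀ j, 0 ≤ c j) ∧ (∀ j, v j ∈ M) ∧ x = ∑ j, c j • v j}

/-- The spherical convex hull `sconv(M) = cone(M) ∩ S^m`. -/
def sconv {m : ℕ} (M : Set (Euc m)) : Set (Euc m) := coneGen M ∩ unitSphere m

/-- The dual set `M̆ = {a ∈ S^m : ⟨a,x⟩ ≤ 0 for all x ∈ M}`. -/
def dualSet {m : ℕ} (M : Set (Euc m)) : Set (Euc m) :=
  {a ∈ unitSphere m | ∀ x ∈ M, ⟪a, x⟫ ≤ 0}

/-- `K` has nonempty interior relative to the sphere. -/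
def HasSphInterior {m : ℕ} (K : Set (Euc m)) : Prop :=
  ∃ x ∈ K, ∃ ε > (0:ℝ), ∀ y ∈ unitSphere m, dist y x < ε → y ∈ K

/-- A convex body in `S^m`: a closed spherically convex set such that both it
and its dual have nonempty interior in `S^m`. -/
def IsConvexBody {m : ℕ} (K : Set (Euc m)) : Prop :=
  K ⊆ unitSphere m ∧ IsClosed K ∧ SphConvex K ∧
    HasSphInterior K ∧ HasSphInterior (dualSet K)

/-- `V` is a smooth (`C^∞`) hypersurface of the sphere `S^m`: locally around
each of its points it is the zero set, within the sphere, of a smooth function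
whose differential does not vanish on the tangent space of the sphere. -/
def IsSmoothHypersurface {m : ℕ} (V : Set (Euc m)) : Prop :=
  V ⊆ unitSphere m ∧ ∀ x ∈ V, ∃ f : Euc m → ℝ, ContDiff ℝ (⊤ : ℕ∞) f ∧
    (∃ U ∈ nhds x, V ∩ U = {y ∈ unitSphere m | f y = 0} ∩ U) ∧
    ∃ v : Euc m, ⟪x, v⟫ = 0 ∧ fderiv ℝ f x v ≠ 0

/-- `p(k,m) = 2^{-(k-1)} ∑_{i=0}^m binom(k-1,i)`. -/
def pkm (k m : ℕ) : ℝ :=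
  (∑ i ∈ Finset.range (m + 1), (Nat.choose (k - 1) i : ℝ)) / 2 ^ (k - 1)

/-- Hausdorff distance between subsets of the sphere, via closed angular
neighborhoods. -/
def sphHausdorffDist {m : ℕ} (K K' : Set (Euc m)) : ℝ :=
  sInf {δ : ℝ | 0 ≤ δ ∧ K ⊆ nbhdClosed K' δ ∧ K' ⊆ nbhdClosed K δ}

end

noncomputable section Helpers

lemma mem_unitSphere {m : ℕ} {x : Euc m} : x ∈ unitSphere m ↔ ‖x‖ = 1 := by
  simp [unitSphere]

lemma inner_le_one' {m : ℕ} {a b : Euc m} (ha : ‖a‖ = 1) (hb : ‖b‖ = 1) :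
    ⟪a, b⟫ ≤ 1 := by
  have := real_inner_le_norm a b
  rwa [ha, hb, one_mul] at this

lemma neg_one_le_inner {m : ℕ} {a b : Euc m} (ha : ‖a‖ = 1) (hb : ‖b‖ = 1) :
    (-1 : ℝ) ≤ ⟪a, b⟫ := by
  have := abs_real_inner_le_norm a b
  rw [ha, hb, one_mul] at this
  linarith [abs_le.mp this]

lemma angdist_nonneg {m : ℕ} (a b : Euc m) : 0 ≤ angdist a b :=
  Real.arccos_nonneg _

lemma angdist_le_of_inner_ge {m : ℕ} {a b c : Euc m}
    (h : ⟪a, b⟫ ≤ ⟪a, c⟫) : angdist a c ≤ angdist a b := by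
  unfold angdist
  rw [Real.arccos_eq_pi_div_two_sub_arcsin, Real.arccos_eq_pi_div_two_sub_arcsin]
  have := Real.monotone_arcsin h
  linarith

lemma chord_le_angdist {m : ℕ} {a b : Euc m} (ha : ‖a‖ = 1) (hb : ‖b‖ = 1) :
    ‖a - b‖ ≤ angdist a b := by
  have h1 : ⟪a, b⟫ ≤ 1 := inner_le_one' ha hb
  have h2 : (-1:ℝ) ≤ ⟪a, b⟫ := neg_one_le_inner ha hb
  have hsq : ‖a - b‖ ^ 2 = 2 - 2 * ⟪a, b⟫ := by
    rw [norm_sub_sq_real, ha, hb]; ring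
  have hcos : Real.cos (angdist a b) = ⟪a, b⟫ := Real.cos_arccos h2 h1
  have hle : ‖a - b‖ ^ 2 ≤ (angdist a b) ^ 2 := by
    have := Real.one_sub_sq_div_two_le_cos (x := angdist a b)
    rw [hcos] at this
    rw [hsq]; nlinarith
  have := Real.sqrt_le_sqrt hle
  rwa [Real.sqrt_sq (norm_nonneg _), Real.sqrt_sq (angdist_nonneg a b)] at this

lemma exists_unit_orth {m : ℕ} (hm : 0 < m) (a : Euc m) (ha : a ≠ 0) :
    ∃ p : Euc m, ‖p‖ = 1 ∧ ⟪a, p⟫ = 0 := by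
  have hrank : Module.finrank ℝ (Euc m) = m + 1 := by
    simp [finrank_euclideanSpace]
  have hK : Module.finrank ℝ (Submodule.span ℝ {a}) = 1 := finrank_span_singleton ha
  have horth : 0 < Module.finrank ℝ (Submodule.span ℝ {a})ᗮ := by
    have := Submodule.finrank_add_finrank_orthogonal (K := Submodule.span ℝ {a}) (𝕜 := ℝ)
    omega
  have hbot : (Submodule.span ℝ {a})ᗮ ≠ ⊥ := by
    intro h
    rw [h] at horth
    simp at horth
  obtain ⟨q, hq, hq0⟩ := Submodule.exists_mem_ne_zero_of_ne_bot hbot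
  refine ⟨‖q‖⁻¹ • q, ?_, ?_⟩
  · rw [norm_smul, norm_inv, norm_norm, inv_mul_cancel₀ (norm_ne_zero_iff.mpr hq0)]
  · rw [real_inner_smul_right]
    have := (Submodule.mem_orthogonal _ _).mp hq a (Submodule.mem_span_singleton_self a)
    rw [this, mul_zero]

lemma exists_perturb {m : ℕ} {x p : Euc m} (hx : x ∈ unitSphere m)
    (hpx : ⟪p, x⟫ = 0) (hp : ‖p‖ = 1) {ε : ℝ} (hε : 0 < ε) :
    ∃ y ∈ unitSphere m, dist y x < ε ∧ 0 < ⟪p, y⟫ := by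
  have hx1 : ‖x‖ = 1 := mem_unitSphere.mp hx
  set f : ℝ → Euc m := fun t => (‖x + t • p‖)⁻¹ • (x + t • p) with hf
  have hnormsq : ∀ t : ℝ, ‖x + t • p‖ ^ 2 = 1 + t ^ 2 := by
    intro t
    rw [norm_add_sq_real, hx1, real_inner_smul_right, norm_smul, real_inner_comm, hpx]
    simp [hp, mul_pow]
  have hpos : ∀ t : ℝ, 0 < ‖x + t • p‖ := by
    intro t
    have h2 : (0:ℝ) < 1 + t ^ 2 := by positivity
    have := hnormsq t
    nlinarith [norm_nonneg (x + t • p)]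
  have hcont : Continuous f := by
    have hc : Continuous fun t : ℝ => x + t • p :=
      continuous_const.add (continuous_id.smul continuous_const)
    exact (hc.norm.inv₀ fun t => (hpos t).ne').smul hc
  have hf0 : f 0 = x := by simp [hf, hx1]
  obtain ⟨δ, hδ, hδ'⟩ := (Metric.continuous_iff.mp hcont) 0 ε hε
  refine ⟨f (δ/2), ?_, ?_, ?_⟩
  · rw [mem_unitSphere, hf]
    simp only [norm_smul, norm_inv, norm_norm]
    rw [inv_mul_cancel₀ (hpos _).ne']
  · have := hδ' (δ/2) (by rw [Real.dist_eq]; rw [abs_of_pos (by linarith)]; linarith)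
    rwa [hf0] at this
  · rw [hf, real_inner_smul_right, inner_add_right, real_inner_smul_right, hpx,
      real_inner_self_eq_norm_sq, hp]
    have := hpos (δ/2)
    rw [zero_add]
    positivity

/-- A strictly feasible system of unit vectors admits a strict solution. -/
lemma strict_sol {m N : ℕ} {C : Fin N → Euc m} (hC : ∀ i, C i ∈ unitSphere m)
    (h : StrictlyFeasible C) : ∃ x ∈ unitSphere m, ∀ j, ⟪C j, x⟫ < 0 := by
  obtain ⟨x, hxSol, ε, hε, hball⟩ := h
  refine ⟨x, hxSol.1, fun j => ?_⟩
  by_contra hcon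
  push_neg at hcon
  have heq : ⟪C j, x⟫ = 0 := le_antisymm (hxSol.2 j) hcon
  obtain ⟨y, hyS, hyd, hyp⟩ := exists_perturb hxSol.1 heq (mem_unitSphere.mp (hC j)) hε
  have := (hball y hyS hyd).2 j
  linarith

lemma dProd_nonneg {m N : ℕ} (C B : Fin N → Euc m) : 0 ≤ dProd C B :=
  Real.iSup_nonneg fun i => angdist_nonneg _ _

lemma bddBelow_dProd_image {m N : ℕ} (C : Fin N → Euc m) :
    BddBelow (dProd C '' illPosed m N) := by
  refine ⟨0, fun y hy => ?_⟩
  obtain ⟨B, _, rfl⟩ := hy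
  exact dProd_nonneg C B

/-- For `m ≥ 1`, `N ≥ 2`, any instance has an ill-posed instance within
angular distance `π/2`. -/
lemma exists_illPosed_near {m N : ℕ} (hm : 0 < m) (hN : 2 ≤ N)
    (C : Fin N → Euc m) (hC : ∀ i, C i ∈ unitSphere m) :
    ∃ B ∈ illPosed m N, dProd C B ≤ Real.pi / 2 := by
  haveI : NeZero N := ⟨by omega⟩
  set i0 : Fin N := ⟨0, by omega⟩ with hi0
  set i1 : Fin N := ⟨1, by omega⟩ with hi1
  have h01 : i0 ≠ i1 := by simp [hi0, hi1, Fin.ext_iff]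
  have hC0 : ‖C i0‖ = 1 := mem_unitSphere.mp (hC i0)
  obtain ⟨p₀, hp₀, hp₀orth⟩ := exists_unit_orth hm (C i0)
    (by intro h; rw [h] at hC0; simp at hC0)
  set p : Euc m := if ⟪C i1, p₀⟫ ≤ 0 then p₀ else -p₀ with hpdef
  have hp : ‖p‖ = 1 := by
    rw [hpdef]; split <;> simp [hp₀]
  have hporth : ⟪C i0, p⟫ = 0 := by
    rw [hpdef]; split <;> simp [hp₀orth]
  have hp1 : ⟪C i1, p⟫ ≤ 0 := by
    rw [hpdef]; split
    · assumption
    · rw [inner_neg_right]; linarith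
  set B : Fin N → Euc m := fun i =>
    if i = i1 then -p else if 0 ≤ ⟪C i, p⟫ then p else -p with hBdef
  have hBsphere : ∀ i, B i ∈ unitSphere m := by
    intro i
    rw [mem_unitSphere, hBdef]
    dsimp only
    split
    · simp [hp]
    · split <;> simp [hp]
  have hB0 : B i0 = p := by
    rw [hBdef]
    dsimp only
    rw [if_neg h01, if_pos (le_of_eq hporth.symm)]
  have hB1 : B i1 = -p := by
    rw [hBdef]
    dsimp only
    rw [if_pos rfl]
  have hBinner : ∀ i, 0 ≤ ⟪C i, B i⟫ := by
    intro i
    rw [hBdef]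
    dsimp only
    split
    · rename_i hi
      rw [hi, inner_neg_right]
      linarith
    · split
      · assumption
      · rw [inner_neg_right]; linarith
  obtain ⟨y, hy, hyorth⟩ := exists_unit_orth hm p
    (by intro h; rw [h] at hp; simp at hp)
  have hpy : ⟪p, y⟫ = 0 := hyorth
  refine ⟨B, ⟨hBsphere, ⟨y, mem_unitSphere.mpr hy, fun i => ?_⟩, ?_⟩, ?_⟩
  · -- feasibility : ⟪B i, y⟫ ≤ 0
    rw [hBdef]
    dsimp only
    split
    · rw [inner_neg_left, hpy]; simp
    · split
      · rw [hpy]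
      · rw [inner_neg_left, hpy]; simp
  · -- not strictly feasible
    rintro ⟨x, hxSol, ε, hε, hball⟩
    have hx0 : ⟪p, x⟫ ≤ 0 := by have := hxSol.2 i0; rwa [hB0] at this
    have hx1 : ⟪p, x⟫ ≥ 0 := by
      have := hxSol.2 i1
      rw [hB1, inner_neg_left] at this
      linarith
    obtain ⟨z, hzS, hzd, hzp⟩ := exists_perturb hxSol.1 (le_antisymm hx0 hx1) hp hε
    have := (hball z hzS hzd).2 i0
    rw [hB0] at this
    linarith
  · -- distance bound
    refine ciSup_le fun i => ?_
    exact Real.arccos_le_pi_div_two.mpr (hBinner i)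

lemma distSigma_le_pi_div_two {m N : ℕ} (hm : 0 < m) (hN : 2 ≤ N)
    (C : Fin N → Euc m) (hC : ∀ i, C i ∈ unitSphere m) :
    distSigma C ≤ Real.pi / 2 := by
  obtain ⟨B, hB, hBle⟩ := exists_illPosed_near hm hN C hC
  exact csInf_le_of_le (bddBelow_dProd_image C) ⟨B, hB, rfl⟩ hBle

end Helpers

/-- A point on the unit sphere. -/
lemma unitSphere_nonempty (m : ℕ) : (unitSphere m).Nonempty := by
  refine ⟨EuclideanSpace.single 0 (1:ℝ), ?_⟩
  rw [mem_unitSphere, EuclideanSpace.norm_single]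
  norm_num

/-- An infeasible instance of unit vectors is at positive distance from the
ill-posed instances. -/
lemma distSigma_pos {m N : ℕ} (hm : 0 < m) (hN : 2 ≤ N)
    {C : Fin N → Euc m} (hC : ∀ i, C i ∈ unitSphere m)
    (hinf : ¬ Feasible C) : 0 < distSigma C := by
  haveI : NeZero N := ⟨by omega⟩
  set f : Euc m → ℝ := fun x => ∑ j, max ⟪C j, x⟫ 0 with hfdef
  have hfcont : Continuous f := by
    refine continuous_finset_sum _ fun j _ => ?_
    exact (Continuous.inner continuous_const continuous_id).max continuous_const
  obtain ⟨x₀, hx₀S, hmin⟩ := (isCompact_sphere (0 : Euc m) 1).exists_isMinOn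
    (unitSphere_nonempty m) hfcont.continuousOn
  have hstrict : ∀ x ∈ unitSphere m, 0 < f x := by
    intro x hx
    have : ¬ (∀ i, ⟪C i, x⟫ ≤ 0) := fun h => hinf ⟨x, hx, h⟩
    push_neg at this
    obtain ⟨j, hj⟩ := this
    refine Finset.sum_pos' (fun i _ => le_max_right _ _) ⟨j, Finset.mem_univ j, ?_⟩
    exact lt_max_iff.mpr (Or.inl hj)
  set δ : ℝ := f x₀ with hδdef
  have hδpos : 0 < δ := hstrict x₀ hx₀S
  have hδN : 0 < δ / N := by positivity
  obtain ⟨B₀, hB₀, _⟩ := exists_illPosed_near hm hN C hC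
  have hlower : ∀ b ∈ dProd C '' illPosed m N, δ / N ≤ b := by
    rintro b ⟨B, hB, rfl⟩
    obtain ⟨x, hxS, hxSol⟩ := hB.2.1
    have hfx : δ ≤ f x := (isMinOn_iff.mp hmin) x hxS
    have hexj : ∃ j, δ / N ≤ max ⟪C j, x⟫ 0 := by
      by_contra hcon
      push_neg at hcon
      have hsum : f x < ∑ _j : Fin N, δ / N :=
        Finset.sum_lt_sum_of_nonempty Finset.univ_nonempty fun i _ => hcon i
      rw [Finset.sum_const, Finset.card_univ, Fintype.card_fin, nsmul_eq_mul] at hsum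
      rw [mul_div_cancel₀ _ (by positivity : (N:ℝ) ≠ 0)] at hsum
      linarith
    obtain ⟨j, hj⟩ := hexj
    have hj' : δ / N ≤ ⟪C j, x⟫ := by
      rcases le_max_iff.mp hj with h | h
      · exact h
      · linarith
    have h1 : ⟪C j - B j, x⟫ ≤ ‖C j - B j‖ := by
      have := real_inner_le_norm (C j - B j) x
      rwa [mem_unitSphere.mp hxS, mul_one] at this
    have h2 : ‖C j - B j‖ ≤ angdist (C j) (B j) :=
      chord_le_angdist (mem_unitSphere.mp (hC j)) (mem_unitSphere.mp (hB.1 j))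
    have h3 : angdist (C j) (B j) ≤ dProd C B := by
      unfold dProd
      exact le_ciSup ((Set.finite_range (fun i => angdist (C i) (B i))).bddAbove) j
    have h4 : δ / N ≤ ⟪C j - B j, x⟫ := by
      rw [inner_sub_left]
      have := hxSol j
      linarith
    linarith
  have hds : δ / N ≤ sInf (dProd C '' illPosed m N) :=
    le_csInf ⟨dProd C B₀, ⟨B₀, hB₀, rfl⟩⟩ hlower
  unfold distSigma
  linarith

/-- Moving an infeasible instance towards a feasible one, one crosses the
ill-posed set, without increasing the distance to the starting instance. -/
lemma path_illPosed {m N : ℕ}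
    {A' B' : Fin N → Euc m} (hA' : ∀ j, A' j ∈ unitSphere m)
    (hB' : ∀ j, B' j ∈ unitSphere m)
    (hc : ∀ j, 0 < ⟪A' j, B' j⟫) (hinfA : ¬ Feasible A') (hfeasB : Feasible B') :
    ∃ B'' ∈ illPosed m N, ∀ j, angdist (A' j) (B'' j) ≤ angdist (A' j) (B' j) := by
  have ha : ∀ j, ‖A' j‖ = 1 := fun j => mem_unitSphere.mp (hA' j)
  have hb : ∀ j, ‖B' j‖ = 1 := fun j => mem_unitSphere.mp (hB' j)
  have hc1 : ∀ j, ⟪A' j, B' j⟫ ≤ 1 := fun j => inner_le_one' (ha j) (hb j)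
  set v : ℝ → Fin N → Euc m := fun t j => (1-t) • A' j + t • B' j with hvdef
  have hvsq : ∀ (t : ℝ) (j : Fin N),
      ‖v t j‖ ^ 2 = 1 - 2*t*(1-t)*(1 - ⟪A' j, B' j⟫) := by
    intro t j
    rw [hvdef]
    dsimp only
    rw [norm_add_sq_real, norm_smul, norm_smul, real_inner_smul_left,
      real_inner_smul_right, ha j, hb j]
    simp only [Real.norm_eq_abs, mul_one]
    rw [sq_abs, sq_abs]
    ring
  have hvpos : ∀ (t : ℝ) (j : Fin N), 0 < ‖v t j‖ := by
    intro t j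
    have hsq := hvsq t j
    have h1 : 0 < ‖v t j‖ ^ 2 := by nlinarith [sq_nonneg (t - 1/2), hc j, hc1 j]
    nlinarith [norm_nonneg (v t j)]
  have hvle1 : ∀ t ∈ Icc (0:ℝ) 1, ∀ j, ‖v t j‖ ≤ 1 := by
    intro t ht j
    have hsq := hvsq t j
    have h1 : ‖v t j‖ ^ 2 ≤ 1 := by
      nlinarith [mul_nonneg (mul_nonneg ht.1 (by linarith [ht.2] : (0:ℝ) ≤ 1 - t))
        (by linarith [hc1 j] : (0:ℝ) ≤ 1 - ⟪A' j, B' j⟫)]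
    nlinarith [norm_nonneg (v t j)]
  set γ : ℝ → Fin N → Euc m := fun t j => (‖v t j‖)⁻¹ • v t j with hγdef
  have hγS : ∀ (t : ℝ) (j : Fin N), γ t j ∈ unitSphere m := by
    intro t j
    rw [mem_unitSphere, hγdef]
    dsimp only
    rw [norm_smul, norm_inv, norm_norm, inv_mul_cancel₀ (hvpos t j).ne']
  have hγ0 : ∀ j, γ 0 j = A' j := by
    intro j
    rw [hγdef, hvdef]
    dsimp only
    simp [ha j]
  have hγ1 : ∀ j, γ 1 j = B' j := by
    intro j
    rw [hγdef, hvdef]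
    dsimp only
    simp [hb j]
  have hγcont : ∀ j, Continuous fun t => γ t j := by
    intro j
    have hvc : Continuous fun t => v t j := by
      rw [hvdef]
      exact ((continuous_const.sub continuous_id).smul continuous_const).add
        (continuous_id.smul continuous_const)
    exact (hvc.norm.inv₀ fun t => (hvpos t j).ne').smul hvc
  have hinner : ∀ t ∈ Icc (0:ℝ) 1, ∀ j, ⟪A' j, B' j⟫ ≤ ⟪A' j, γ t j⟫ := by
    intro t ht j
    have hval : ⟪A' j, γ t j⟫ = (‖v t j‖)⁻¹ * ((1-t) + t * ⟪A' j, B' j⟫) := by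
      rw [hγdef, hvdef]
      dsimp only
      rw [real_inner_smul_right, inner_add_right, real_inner_smul_right,
        real_inner_smul_right, real_inner_self_eq_norm_sq, ha j]
      ring
    rw [hval]
    have hinv : 1 ≤ (‖v t j‖)⁻¹ := (one_le_inv₀ (hvpos t j)).mpr (hvle1 t ht j)
    have hnum : ⟪A' j, B' j⟫ ≤ (1-t) + t * ⟪A' j, B' j⟫ := by
      nlinarith [mul_nonneg (by linarith [ht.2] : (0:ℝ) ≤ 1 - t)
        (by linarith [hc1 j] : (0:ℝ) ≤ 1 - ⟪A' j, B' j⟫)]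
    nlinarith [mul_nonneg (by linarith : (0:ℝ) ≤ (‖v t j‖)⁻¹ - 1)
      (by nlinarith [hc j] : (0:ℝ) ≤ (1-t) + t * ⟪A' j, B' j⟫)]
  set F : Set ℝ := {t ∈ Icc (0:ℝ) 1 | ∃ x ∈ unitSphere m, ∀ j, ⟪γ t j, x⟫ ≤ 0}
    with hFdef
  have hF1 : (1:ℝ) ∈ F := by
    obtain ⟨x, hxS, hxsol⟩ := hfeasB
    refine ⟨by norm_num, x, hxS, fun j => ?_⟩
    rw [hγ1 j]
    exact hxsol j
  set K : Set (ℝ × Euc m) := {q | q.1 ∈ Icc (0:ℝ) 1 ∧ q.2 ∈ unitSphere m ∧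
    ∀ j, ⟪γ q.1 j, q.2⟫ ≤ 0} with hKdef
  have hKclosed : IsClosed K := by
    have h1 : IsClosed {q : ℝ × Euc m | q.1 ∈ Icc (0:ℝ) 1} :=
      isClosed_Icc.preimage continuous_fst
    have h2 : IsClosed {q : ℝ × Euc m | q.2 ∈ unitSphere m} :=
      Metric.isClosed_sphere.preimage continuous_snd
    have h3 : ∀ j : Fin N, IsClosed {q : ℝ × Euc m | ⟪γ q.1 j, q.2⟫ ≤ 0} :=
      fun j => isClosed_le
        (Continuous.inner ((hγcont j).comp continuous_fst) continuous_snd)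
        continuous_const
    have hKeq : K = {q : ℝ × Euc m | q.1 ∈ Icc (0:ℝ) 1} ∩
        ({q : ℝ × Euc m | q.2 ∈ unitSphere m} ∩
          ⋂ j : Fin N, {q : ℝ × Euc m | ⟪γ q.1 j, q.2⟫ ≤ 0}) := by
      ext q
      simp only [hKdef, Set.mem_setOf_eq, Set.mem_inter_iff, Set.mem_iInter]
    rw [hKeq]
    exact h1.inter (h2.inter (isClosed_iInter h3))
  have hKcompact : IsCompact K := by
    refine IsCompact.of_isClosed_subset
      ((isCompact_Icc (a := (0:ℝ)) (b := 1)).prod (isCompact_sphere (0 : Euc m) 1))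
      hKclosed ?_
    rintro ⟨t, x⟩ ⟨ht, hx, _⟩
    exact ⟨ht, hx⟩
  have hFK : F = Prod.fst '' K := by
    ext t
    constructor
    · rintro ⟨ht, x, hxS, hxsol⟩
      exact ⟨(t, x), ⟨ht, hxS, hxsol⟩, rfl⟩
    · rintro ⟨⟨t', x⟩, ⟨ht, hxS, hxsol⟩, rfl⟩
      exact ⟨ht, x, hxS, hxsol⟩
  have hFclosed : IsClosed F := by
    rw [hFK]
    exact (hKcompact.image continuous_fst).isClosed
  have hFbdd : BddBelow F := ⟨0, fun t ht => ht.1.1⟩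
  have hFne : F.Nonempty := ⟨1, hF1⟩
  set t₀ : ℝ := sInf F with ht₀def
  have ht₀F : t₀ ∈ F := hFclosed.csInf_mem hFne hFbdd
  have ht₀Icc : t₀ ∈ Icc (0:ℝ) 1 := ht₀F.1
  have ht₀pos : 0 < t₀ := by
    rcases lt_or_eq_of_le ht₀Icc.1 with h | h
    · exact h
    · exfalso
      apply hinfA
      obtain ⟨_, x, hxS, hxsol⟩ := ht₀F
      refine ⟨x, hxS, fun j => ?_⟩
      have := hxsol j
      rw [← h, hγ0 j] at this
      exact this
  refine ⟨γ t₀, ⟨fun j => hγS t₀ j, ?_, ?_⟩, fun j => ?_⟩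
  · -- feasible
    obtain ⟨_, x, hxS, hxsol⟩ := ht₀F
    exact ⟨x, hxS, hxsol⟩
  · -- not strictly feasible
    intro hsf
    obtain ⟨x, hxS, hxstrict⟩ := strict_sol (fun j => hγS t₀ j) hsf
    have hUopen : IsOpen (⋂ j : Fin N, {t : ℝ | ⟪γ t j, x⟫ < 0}) := by
      refine isOpen_iInter_of_finite fun j => ?_
      exact isOpen_lt (Continuous.inner (hγcont j) continuous_const) continuous_const
    have ht₀U : t₀ ∈ ⋂ j : Fin N, {t : ℝ | ⟪γ t j, x⟫ < 0} :=
      Set.mem_iInter.mpr fun j => hxstrict j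
    obtain ⟨ε, hε, hball⟩ := Metric.isOpen_iff.mp hUopen t₀ ht₀U
    set t₁ : ℝ := t₀ - min (ε/2) (t₀/2) with ht₁def
    have hmin1 : min (ε/2) (t₀/2) ≤ ε/2 := min_le_left _ _
    have hmin2 : min (ε/2) (t₀/2) ≤ t₀/2 := min_le_right _ _
    have hminpos : 0 < min (ε/2) (t₀/2) := lt_min (by linarith) (by linarith)
    have ht₁ball : t₁ ∈ Metric.ball t₀ ε := by
      rw [Metric.mem_ball, Real.dist_eq, ht₁def]
      rw [abs_of_nonpos (by linarith)]
      linarith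
    have ht₁F : t₁ ∈ F := by
      refine ⟨⟨by rw [ht₁def]; linarith, by rw [ht₁def]; linarith [ht₀Icc.2]⟩,
        x, hxS, fun j => ?_⟩
      have := Set.mem_iInter.mp (hball ht₁ball) j
      exact le_of_lt this
    have := csInf_le hFbdd ht₁F
    rw [← ht₀def] at this
    rw [ht₁def] at this
    linarith
  · -- distance bound
    exact angdist_le_of_inner_ge (hinner t₀ ht₀Icc j)

/-- In `S^0` every feasible instance is strictly feasible, so there are no
ill-posed instances. -/
lemma illPosed_zero_empty (N : ℕ) : illPosed 0 N = ∅ := by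
  ext B
  simp only [illPosed, Set.mem_setOf_eq, Set.mem_empty_iff_false, iff_false, not_and]
  intro hBs hfeas
  obtain ⟨x, hxS, hxsol⟩ := hfeas
  intro hnsf
  apply hnsf
  have habs : ∀ z : Euc 0, ‖z‖ = |z 0| := by
    intro z
    rw [EuclideanSpace.norm_eq]
    simp [Real.sqrt_sq_eq_abs]
  refine ⟨x, ⟨hxS, hxsol⟩, 1, one_pos, fun y hyS hyd => ?_⟩
  have hyx : y = x := by
    have hy1 : |y 0| = 1 := by rw [← habs]; exact mem_unitSphere.mp hyS
    have hx1 : |x 0| = 1 := by rw [← habs]; exact mem_unitSphere.mp hxS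
    have hd : |y 0 - x 0| < 1 := by
      have : dist y x = ‖y - x‖ := dist_eq_norm y x
      rw [this, habs] at hyd
      simpa using hyd
    have hy0 : y 0 = x 0 := by
      rcases (abs_eq one_pos.le).mp hy1 with h | h <;>
        rcases (abs_eq one_pos.le).mp hx1 with h' | h' <;>
          rw [h, h'] <;> rw [h, h'] at hd <;> norm_num at hd
    ext i
    have hi := i.isLt
    have h0 : i = 0 := by
      apply Fin.ext
      rw [Fin.val_zero]
      omega
    rw [h0, hy0]
  rw [hyx]
  exact ⟨hxS, hxsol⟩

/-- Monotonicity: if the truncation `A_{k+1}` of `A` is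
infeasible, then `𝒞(A_{k+1}) ≥ 𝒞(A)`. -/
theorem GCC_monotone_truncation (m n k : ℕ) (hn : n > m + 1)
    (hk : m + 1 ≤ k) (hk' : k < n)
    (A : Fin n → Euc m) (hA : ∀ i, A i ∈ unitSphere m)
    (hinf : ¬ Feasible (fun j : Fin (k + 1) => A (Fin.castLE (by omega) j))) :
    GCC (fun j : Fin (k + 1) => A (Fin.castLE (by omega) j)) ≥ GCC A := by
  have hle : k + 1 ≤ n := by omega
  set A' : Fin (k+1) → Euc m := fun j => A (Fin.castLE hle j) with hA'def
  have hgoal : GCC A' ≥ GCC A → GCC (fun j : Fin (k + 1) => A (Fin.castLE (by omega) j)) ≥ GCC A := fun h => h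
  apply hgoal
  have hinf' : ¬ Feasible A' := hinf
  rcases Nat.eq_zero_or_pos m with hm | hm
  · subst hm
    have hz : ∀ (M : ℕ) (C : Fin M → Euc 0), GCC C = 0 := by
      intro M C
      unfold GCC distSigma
      rw [illPosed_zero_empty, Set.image_empty, Real.sInf_empty, Real.sin_zero, div_zero]
    rw [hz _ A', hz _ A]
  · have hk2 : 2 ≤ k + 1 := by omega
    have hn2 : 2 ≤ n := by omega
    have hA' : ∀ j, A' j ∈ unitSphere m := fun j => hA _
    have h1 : 0 < distSigma A' := distSigma_pos hm hk2 hA' hinf'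
    have h2 : distSigma A' ≤ Real.pi / 2 := distSigma_le_pi_div_two hm hk2 A' hA'
    have h3 : distSigma A ≤ Real.pi / 2 := distSigma_le_pi_div_two hm hn2 A hA
    have h4 : distSigma A' ≤ distSigma A := by
      obtain ⟨B₀, hB₀, _⟩ := exists_illPosed_near hm hn2 A hA
      refine le_csInf ⟨dProd A B₀, B₀, hB₀, rfl⟩ ?_
      rintro b ⟨B, hB, rfl⟩
      rcases le_or_gt (Real.pi/2) (dProd A B) with hcase | hcase
      · exact le_trans h2 hcase
      · set B' : Fin (k+1) → Euc m := fun j => B (Fin.castLE hle j) with hB'def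
        have hB'S : ∀ j, B' j ∈ unitSphere m := fun j => hB.1 _
        have hfeasB' : Feasible B' := by
          obtain ⟨x, hxS, hxsol⟩ := hB.2.1
          exact ⟨x, hxS, fun j => hxsol _⟩
        have hcj : ∀ j, 0 < ⟪A' j, B' j⟫ := by
          intro j
          have hd : angdist (A (Fin.castLE hle j)) (B (Fin.castLE hle j)) ≤ dProd A B := by
            unfold dProd
            exact le_ciSup ((Set.finite_range
              (fun i => angdist (A i) (B i))).bddAbove) (Fin.castLE hle j)
          have hlt : angdist (A' j) (B' j) < Real.pi/2 := lt_of_le_of_lt hd hcase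
          exact Real.arccos_lt_pi_div_two.mp hlt
        obtain ⟨B'', hB'', hdist⟩ := path_illPosed hA' hB'S hcj hinf' hfeasB'
        have hstep : distSigma A' ≤ dProd A' B'' :=
          csInf_le (bddBelow_dProd_image A') ⟨B'', hB'', rfl⟩
        refine le_trans hstep (ciSup_le fun j => le_trans (hdist j) ?_)
        have : angdist (A (Fin.castLE hle j)) (B (Fin.castLE hle j)) ≤ dProd A B := by
          unfold dProd
          exact le_ciSup ((Set.finite_range
            (fun i => angdist (A i) (B i))).bddAbove) (Fin.castLE hle j)
        exact this
    have hpi := Real.pi_pos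
    have h5 : Real.sin (distSigma A') ≤ Real.sin (distSigma A) := by
      refine Real.strictMonoOn_sin.monotoneOn ⟨?_, ?_⟩ ⟨?_, ?_⟩ h4 <;> linarith
    have h6 : 0 < Real.sin (distSigma A') :=
      Real.sin_pos_of_pos_of_lt_pi h1 (by linarith)
    unfold GCC
    exact one_div_le_one_div_of_le h6 h5
end

section
/- Define p(k,m) := 2^{−(k−1)} · Σ_{i=0}^m binom(k−1, i) for integers k > m ≥ 1. Then Σ_{k=4m+1}^∞ k·p(k,m) tends to 0 as m → ∞. -/
open MeasureTheory Real Set Filter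
open scoped ENNReal NNReal BigOperators RealInnerProductSpace

/-- Chernoff-type bound: `∑_{i≤m} C(n,i) ≤ 3^m (4/3)^n`. -/
lemma sumC_le (n m : ℕ) :
    (∑ i ∈ Finset.range (m + 1), (n.choose i : ℝ)) ≤ 3 ^ m * (4 / 3) ^ n := by
  have step1 : (∑ i ∈ Finset.range (m + 1), (n.choose i : ℝ)) ≤
      3 ^ m * ∑ i ∈ Finset.range (m + 1), (n.choose i : ℝ) * (1 / 3) ^ i := by
    rw [Finset.mul_sum]
    refine Finset.sum_le_sum fun i hi => ?_
    have him : i ≤ m := Nat.lt_succ_iff.mp (Finset.mem_range.mp hi)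
    have h1 : (1 : ℝ) ≤ 3 ^ m * (1 / 3) ^ i := by
      have heq : (3 : ℝ) ^ m * (1 / 3) ^ i = 3 ^ m / 3 ^ i := by
        rw [div_pow, one_pow]; ring
      rw [heq, le_div_iff₀ (by positivity), one_mul]
      exact pow_le_pow_right₀ (by norm_num) him
    calc (n.choose i : ℝ) = 1 * (n.choose i : ℝ) := by ring
      _ ≤ (3 ^ m * (1 / 3) ^ i) * (n.choose i : ℝ) :=
          mul_le_mul_of_nonneg_right h1 (by positivity)
      _ = 3 ^ m * ((n.choose i : ℝ) * (1 / 3) ^ i) := by ring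
  have step2 : ∑ i ∈ Finset.range (m + 1), (n.choose i : ℝ) * (1 / 3) ^ i ≤
      ∑ i ∈ Finset.range (n + m + 1), (n.choose i : ℝ) * (1 / 3) ^ i := by
    apply Finset.sum_le_sum_of_subset_of_nonneg
    · apply Finset.range_subset_range.mpr; omega
    · intro i _ _; positivity
  have step3 : ∑ i ∈ Finset.range (n + m + 1), (n.choose i : ℝ) * (1 / 3) ^ i
      = (4 / 3) ^ n := by
    have hsub : ∑ i ∈ Finset.range (n + m + 1), (n.choose i : ℝ) * (1 / 3) ^ i
        = ∑ i ∈ Finset.range (n + 1), (n.choose i : ℝ) * (1 / 3) ^ i := by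
      symm
      apply Finset.sum_subset (Finset.range_subset_range.mpr (by omega))
      intro i _ hi
      have hni : n < i := by
        have := Finset.mem_range.not.mp hi; omega
      rw [Nat.choose_eq_zero_of_lt hni]; simp
    rw [hsub]
    have hb := add_pow (1 / 3 : ℝ) 1 n
    simp only [one_pow, mul_one] at hb
    have h43 : (1 / 3 : ℝ) + 1 = 4 / 3 := by norm_num
    rw [h43] at hb
    rw [hb]
    apply Finset.sum_congr rfl
    intro i _
    ring
  calc (∑ i ∈ Finset.range (m + 1), (n.choose i : ℝ))
      ≤ 3 ^ m * ∑ i ∈ Finset.range (m + 1), (n.choose i : ℝ) * (1 / 3) ^ i := step1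
    _ ≤ 3 ^ m * ∑ i ∈ Finset.range (n + m + 1), (n.choose i : ℝ) * (1 / 3) ^ i :=
        mul_le_mul_of_nonneg_left step2 (by positivity)
    _ = 3 ^ m * (4 / 3) ^ n := by rw [step3]

lemma pkm_nonneg (k m : ℕ) : 0 ≤ pkm k m := by
  unfold pkm
  positivity

lemma pkm_le (k m : ℕ) : pkm k m ≤ 3 ^ m * (2 / 3) ^ (k - 1) := by
  unfold pkm
  rw [div_le_iff₀ (by positivity)]
  calc (∑ i ∈ Finset.range (m + 1), ((k - 1).choose i : ℝ))
      ≤ 3 ^ m * (4 / 3) ^ (k - 1) := sumC_le (k - 1) m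
    _ = 3 ^ m * (2 / 3) ^ (k - 1) * 2 ^ (k - 1) := by
        rw [mul_assoc, ← mul_pow]; norm_num

lemma summable_aux (c : ℝ) (hc0 : 0 ≤ c) (hc1 : c < 1) :
    Summable (fun j : ℕ => ((j : ℝ) + 1) * c ^ j) := by
  have h1 : Summable (fun j : ℕ => (j : ℝ) * c ^ j) := by
    have := summable_pow_mul_geometric_of_norm_lt_one (R := ℝ) 1
      (r := c) (by rw [Real.norm_eq_abs, abs_of_nonneg hc0]; exact hc1)
    simpa using this
  have h2 : Summable (fun j : ℕ => c ^ j) := summable_geometric_of_lt_one hc0 hc1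
  have h3 := h1.add h2
  refine h3.congr fun j => ?_
  ring

/-- The bound sequence tends to zero. -/
lemma bound_tendsto :
    Tendsto (fun m : ℕ => (16 / 27 : ℝ) ^ m * ((4 * m + 1 : ℕ) : ℝ)) atTop (nhds 0) := by
  apply Summable.tendsto_atTop_zero
  have h1 : Summable (fun m : ℕ => ((m : ℝ) + 1) * (16 / 27 : ℝ) ^ m) :=
    summable_aux (16 / 27) (by norm_num) (by norm_num)
  have h4 : Summable (fun m : ℕ => 4 * (((m : ℝ) + 1) * (16 / 27 : ℝ) ^ m)) :=
    h1.mul_left 4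
  apply Summable.of_nonneg_of_le (fun m => by positivity) _ h4
  intro m
  push_cast
  have hp : (0:ℝ) ≤ (16 / 27 : ℝ) ^ m := by positivity
  nlinarith [Nat.cast_nonneg (α := ℝ) m]

lemma tsum_tail_le (g h : ℕ → ℝ) (N : ℕ) (hg : Summable g) (hh : Summable h)
    (hpref : ∀ i, i < N → g i = 0) (hterm : ∀ j, g (j + N) ≤ h j) :
    (∑' k, g k) ≤ ∑' j, h j := by
  have hshift := Summable.sum_add_tsum_nat_add N hg
  have hpref' : ∑ i ∈ Finset.range N, g i = 0 :=
    Finset.sum_eq_zero fun i hi => hpref i (Finset.mem_range.mp hi)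
  rw [← hshift, hpref', zero_add]
  exact Summable.tsum_le_tsum hterm ((summable_nat_add_iff N).mpr hg) hh

/-- `∑_{k=4m+1}^∞ k·p(k,m) → 0` as `m → ∞`, where
`p(k,m) = 2^{-(k-1)} ∑_{i=0}^m binom(k-1,i)`. -/
theorem pkm_tail_sum_tendsto_zero :
    Tendsto
      (fun m : ℕ => ∑' k : ℕ, if 4 * m + 1 ≤ k then (k : ℝ) * pkm k m else 0)
      atTop (nhds 0) := by
  set C : ℝ := ∑' j : ℕ, ((j : ℝ) + 1) * (2 / 3 : ℝ) ^ j with hC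
  have hsumC : Summable (fun j : ℕ => ((j : ℝ) + 1) * (2 / 3 : ℝ) ^ j) :=
    summable_aux (2 / 3) (by norm_num) (by norm_num)
  have hG : ∀ m : ℕ, Summable (fun k : ℕ => (k : ℝ) * (3 ^ m * (2 / 3 : ℝ) ^ (k - 1))) := by
    intro m
    have key : ∀ k : ℕ, (k : ℝ) * (3 ^ m * (2 / 3 : ℝ) ^ (k - 1))
        = ((3:ℝ) ^ m * (3 / 2)) * ((k : ℝ) * (2 / 3) ^ k) := by
      intro k
      cases k with
      | zero => simp
      | succ n =>
        have hn : (n + 1 : ℕ) - 1 = n := rfl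
        rw [hn, pow_succ]
        push_cast
        ring
    have h1 : Summable (fun k : ℕ => (k : ℝ) * (2 / 3 : ℝ) ^ k) := by
      have := summable_pow_mul_geometric_of_norm_lt_one (R := ℝ) 1
        (r := (2/3 : ℝ)) (by rw [Real.norm_eq_abs]; rw [abs_of_nonneg] <;> norm_num)
      simpa using this
    exact (h1.mul_left ((3:ℝ) ^ m * (3 / 2))).congr fun k => (key k).symm
  have hfg : ∀ m k : ℕ, (if 4 * m + 1 ≤ k then (k : ℝ) * pkm k m else 0)
      ≤ (if 4 * m + 1 ≤ k then (k : ℝ) * (3 ^ m * (2 / 3 : ℝ) ^ (k - 1)) else 0) := by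
    intro m k
    by_cases h : 4 * m + 1 ≤ k
    · simp only [h, if_true]
      exact mul_le_mul_of_nonneg_left (pkm_le k m) (Nat.cast_nonneg k)
    · simp [h]
  have hf0 : ∀ m k : ℕ, 0 ≤ (if 4 * m + 1 ≤ k then (k : ℝ) * pkm k m else 0) := by
    intro m k
    by_cases h : 4 * m + 1 ≤ k
    · simp only [h, if_true]
      exact mul_nonneg (Nat.cast_nonneg k) (pkm_nonneg k m)
    · simp [h]
  have hg0 : ∀ m k : ℕ,
      0 ≤ (if 4 * m + 1 ≤ k then (k : ℝ) * (3 ^ m * (2 / 3 : ℝ) ^ (k - 1)) else 0) := by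
    intro m k
    by_cases h : 4 * m + 1 ≤ k
    · simp only [h, if_true]; positivity
    · simp [h]
  have hgsum : ∀ m : ℕ, Summable (fun k : ℕ =>
      (if 4 * m + 1 ≤ k then (k : ℝ) * (3 ^ m * (2 / 3 : ℝ) ^ (k - 1)) else 0)) := by
    intro m
    apply Summable.of_nonneg_of_le (hg0 m) _ (hG m)
    intro k
    by_cases h : 4 * m + 1 ≤ k
    · simp [h]
    · simp only [h, if_false]; positivity
  have hfsum : ∀ m : ℕ, Summable (fun k : ℕ =>
      (if 4 * m + 1 ≤ k then (k : ℝ) * pkm k m else 0)) :=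
    fun m => Summable.of_nonneg_of_le (hf0 m) (hfg m) (hgsum m)
  have hTbound : ∀ m : ℕ,
      (∑' k : ℕ, (if 4 * m + 1 ≤ k then (k : ℝ) * (3 ^ m * (2 / 3 : ℝ) ^ (k - 1)) else 0))
      ≤ (16 / 27 : ℝ) ^ m * ((4 * m + 1 : ℕ) : ℝ) * C := by
    intro m
    have key := tsum_tail_le
      (fun k : ℕ => (if 4 * m + 1 ≤ k then (k : ℝ) * (3 ^ m * (2 / 3 : ℝ) ^ (k - 1)) else 0))
      (fun j : ℕ => ((16 / 27 : ℝ) ^ m * ((4 * m + 1 : ℕ) : ℝ)) * (((j : ℝ) + 1) * (2 / 3 : ℝ) ^ j))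
      (4 * m + 1) (hgsum m) (hsumC.mul_left _) ?_ ?_
    · calc (∑' k : ℕ, (if 4 * m + 1 ≤ k then (k : ℝ) * (3 ^ m * (2 / 3 : ℝ) ^ (k - 1)) else 0))
          ≤ ∑' j : ℕ, ((16 / 27 : ℝ) ^ m * ((4 * m + 1 : ℕ) : ℝ)) * (((j : ℝ) + 1) * (2 / 3 : ℝ) ^ j) := key
        _ = (16 / 27 : ℝ) ^ m * ((4 * m + 1 : ℕ) : ℝ) * C := by rw [tsum_mul_left]
    · intro i hi
      have hni : ¬ 4 * m + 1 ≤ i := by omega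
      simp [hni]
    · intro j
      show (if 4 * m + 1 ≤ j + (4 * m + 1) then ((j + (4 * m + 1) : ℕ) : ℝ) *
          (3 ^ m * (2 / 3 : ℝ) ^ (j + (4 * m + 1) - 1)) else 0)
        ≤ ((16 / 27 : ℝ) ^ m * ((4 * m + 1 : ℕ) : ℝ)) * (((j : ℝ) + 1) * (2 / 3 : ℝ) ^ j)
      have hle : 4 * m + 1 ≤ j + (4 * m + 1) := Nat.le_add_left (4 * m + 1) j
      rw [if_pos hle]
      have hexp : j + (4 * m + 1) - 1 = j + 4 * m := by omega
      rw [hexp]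
      have h1 : ((j + (4 * m + 1) : ℕ) : ℝ) ≤ ((j : ℝ) + 1) * ((4 * m + 1 : ℕ) : ℝ) := by
        push_cast
        nlinarith [Nat.cast_nonneg (α := ℝ) j, Nat.cast_nonneg (α := ℝ) m]
      have h2 : (3 : ℝ) ^ m * (2 / 3 : ℝ) ^ (j + 4 * m) =
          (16 / 27 : ℝ) ^ m * (2 / 3 : ℝ) ^ j := by
        rw [pow_add, pow_mul]
        rw [show ((2:ℝ)/3)^4 = 16/81 by norm_num]
        rw [show ((16:ℝ)/27)^m = ((3:ℝ) * (16/81))^m by norm_num]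
        rw [mul_pow]
        ring
      calc ((j + (4 * m + 1) : ℕ) : ℝ) * (3 ^ m * (2 / 3 : ℝ) ^ (j + 4 * m))
          ≤ (((j : ℝ) + 1) * ((4 * m + 1 : ℕ) : ℝ)) * (3 ^ m * (2 / 3 : ℝ) ^ (j + 4 * m)) :=
            mul_le_mul_of_nonneg_right h1 (by positivity)
        _ = ((16 / 27 : ℝ) ^ m * ((4 * m + 1 : ℕ) : ℝ)) * (((j : ℝ) + 1) * (2 / 3 : ℝ) ^ j) := by
            rw [h2]; ring
  have hub : ∀ m : ℕ, (∑' k : ℕ, if 4 * m + 1 ≤ k then (k : ℝ) * pkm k m else 0)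
      ≤ (16 / 27 : ℝ) ^ m * ((4 * m + 1 : ℕ) : ℝ) * C := by
    intro m
    calc (∑' k : ℕ, if 4 * m + 1 ≤ k then (k : ℝ) * pkm k m else 0)
        ≤ ∑' k : ℕ, (if 4 * m + 1 ≤ k then (k : ℝ) * (3 ^ m * (2 / 3 : ℝ) ^ (k - 1)) else 0) :=
          Summable.tsum_le_tsum (hfg m) (hfsum m) (hgsum m)
      _ ≤ _ := hTbound m
  have hlb : ∀ m : ℕ, 0 ≤ (∑' k : ℕ, if 4 * m + 1 ≤ k then (k : ℝ) * pkm k m else 0) :=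
    fun m => tsum_nonneg (hf0 m)
  have hB : Tendsto (fun m : ℕ => (16 / 27 : ℝ) ^ m * ((4 * m + 1 : ℕ) : ℝ) * C)
      atTop (nhds 0) := by
    have := bound_tendsto.mul_const C
    simpa using this
  exact tendsto_of_tendsto_of_tendsto_of_le_of_le tendsto_const_nhds hB hlb hub
end

section
/- Let K be a convex body in S^m whose boundary ∂K is a smooth hypersurface of S^m, and for x ∈ ∂K let ν(x) ∈ S^m denote the inward unit normal, i.e., the unique unit vector v with ⟨v,x⟩ = 0 and ⟨v,y⟩ ≥ 0 for all y ∈ K. Then {−ν(x) : x ∈ ∂K} = ∂K̆, the boundary of the dual set of K. Equivalently, {−v ∈ S^m : there exists x ∈ ∂K with ⟨v,x⟩ = 0 and ⟨v,y⟩ ≥ 0 for all y ∈ K} = ∂K̆. -/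
open MeasureTheory Real Set Filter
open scoped ENNReal NNReal BigOperators RealInnerProductSpace

section AuxProof

open Filter

private lemma norm_combo_eq_one {m : ℕ} {a x : Euc m} (ha : ‖a‖ = 1) (hx : ‖x‖ = 1)
    (hax : ⟪a, x⟫ = 0) (t : ℝ) : ‖Real.cos t • a + Real.sin t • x‖ = 1 := by
  have haa : ⟪a, a⟫ = 1 := by rw [real_inner_self_eq_norm_sq, ha]; ring
  have hxx : ⟪x, x⟫ = 1 := by rw [real_inner_self_eq_norm_sq, hx]; ring
  have h : ⟪Real.cos t • a + Real.sin t • x, Real.cos t • a + Real.sin t • x⟫ = 1 := by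
    rw [real_inner_add_add_self, real_inner_smul_left, real_inner_smul_right,
      real_inner_smul_left, real_inner_smul_right, real_inner_smul_left,
      real_inner_smul_right, haa, hxx, hax]
    nlinarith [Real.sin_sq_add_cos_sq t]
  have h2 : ‖Real.cos t • a + Real.sin t • x‖ ^ 2 = 1 := by
    rw [← real_inner_self_eq_norm_sq]; exact h
  nlinarith [norm_nonneg (Real.cos t • a + Real.sin t • x)]

private lemma mem_closure_sphere_diff {m : ℕ} {M : Set (Euc m)} {a x : Euc m}
    (ha : ‖a‖ = 1) (hx : ‖x‖ = 1) (hax : ⟪a, x⟫ = 0)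
    (hM : ∀ y ∈ M, ⟪x, y⟫ ≤ 0) : a ∈ closure (unitSphere m \ M) := by
  set t : ℕ → ℝ := fun n => 1 / (n + 1) with htdef
  have ht0 : ∀ n, 0 < t n := fun n => by positivity
  have htpi : ∀ n, t n < Real.pi := fun n => by
    have h1 : t n ≤ 1 := by
      rw [htdef]
      rw [div_le_one (by positivity)]
      simp
    linarith [Real.pi_gt_three]
  set u : ℕ → Euc m := fun n => Real.cos (t n) • a + Real.sin (t n) • x with hudef
  have htlim : Tendsto t atTop (nhds 0) := tendsto_one_div_add_atTop_nhds_zero_nat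
  have hc : Tendsto (fun n => Real.cos (t n)) atTop (nhds 1) := by
    have := (Real.continuous_cos.tendsto 0).comp htlim
    simpa [Function.comp_def] using this
  have hs : Tendsto (fun n => Real.sin (t n)) atTop (nhds 0) := by
    have := (Real.continuous_sin.tendsto 0).comp htlim
    simpa [Function.comp_def] using this
  have hu : Tendsto u atTop (nhds a) := by
    have := (hc.smul_const a).add (hs.smul_const x)
    simpa using this
  refine mem_closure_of_tendsto hu (Filter.Eventually.of_forall fun n => ?_)
  have hxa : ⟪x, a⟫ = 0 := by rw [real_inner_comm]; exact hax
  have hxx : ⟪x, x⟫ = 1 := by rw [real_inner_self_eq_norm_sq, hx]; ring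
  have hinner : ⟪x, u n⟫ = Real.sin (t n) := by
    rw [hudef]
    rw [inner_add_right, real_inner_smul_right, real_inner_smul_right, hxa, hxx]
    ring
  have hsinpos : 0 < Real.sin (t n) := Real.sin_pos_of_pos_of_lt_pi (ht0 n) (htpi n)
  constructor
  · show u n ∈ Metric.sphere (0 : Euc m) 1
    rw [mem_sphere_zero_iff_norm]
    exact norm_combo_eq_one ha hx hax (t n)
  · intro hmem
    have := hM _ hmem
    rw [hinner] at this
    linarith

private lemma dualSet_closed {m : ℕ} (K : Set (Euc m)) : IsClosed (dualSet K) := by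
  have : dualSet K = unitSphere m ∩ ⋂ x ∈ K, {a : Euc m | ⟪a, x⟫ ≤ 0} := by
    ext a
    simp [dualSet, Set.mem_iInter]
  rw [this]
  exact (Metric.isClosed_sphere).inter
    (isClosed_biInter fun x _ => isClosed_le (continuous_id.inner continuous_const)
      continuous_const)

end AuxProof

/-- For a convex body `K` in `S^m` with smooth boundary,
the image of the boundary under minus the inward unit normal equals the
boundary of the dual set: `{-ν(x) : x ∈ ∂K} = ∂K̆`. -/
theorem neg_normal_image_eq_boundary_dual (m : ℕ) (K : Set (Euc m))
    (hK : IsConvexBody K) (hsm : IsSmoothHypersurface (sphBoundary K)) :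
    {w : Euc m | ∃ v : Euc m, w = -v ∧ v ∈ unitSphere m ∧
        ∃ x ∈ sphBoundary K, ⟪v, x⟫ = 0 ∧ ∀ y ∈ K, 0 ≤ ⟪v, y⟫} =
      sphBoundary (dualSet K) := by
  have hKsub : K ⊆ unitSphere m := hK.1
  have hKclosed : IsClosed K := hK.2.1
  have hDclosed : IsClosed (dualSet K) := dualSet_closed K
  ext w
  constructor
  · rintro ⟨v, rfl, hv, x, hxB, hvx, hvK⟩
    have hvnorm : ‖v‖ = 1 := by rwa [← mem_sphere_zero_iff_norm]
    have hxK : x ∈ K := by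
      have : x ∈ closure K := hxB.1
      rwa [hKclosed.closure_eq] at this
    have hxnorm : ‖x‖ = 1 := by
      have := hKsub hxK
      rwa [unitSphere, mem_sphere_zero_iff_norm] at this
    have hwD : -v ∈ dualSet K := by
      refine ⟨?_, fun y hy => ?_⟩
      · rw [unitSphere, mem_sphere_zero_iff_norm, norm_neg]; exact hvnorm
      · rw [inner_neg_left]
        linarith [hvK y hy]
    constructor
    · exact subset_closure hwD
    · refine mem_closure_sphere_diff (by rw [norm_neg]; exact hvnorm) hxnorm ?_ ?_
      · rw [inner_neg_left, hvx, neg_zero]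
      · intro y hy
        rw [real_inner_comm]
        exact hy.2 x hxK
  · rintro ⟨hw1, hw2⟩
    have hwD : w ∈ dualSet K := by rwa [hDclosed.closure_eq] at hw1
    have hwnorm : ‖w‖ = 1 := by
      have := hwD.1
      rwa [unitSphere, mem_sphere_zero_iff_norm] at this
    -- extract a sequence in S \ dualSet K converging to w
    obtain ⟨b, hb, hblim⟩ := mem_closure_iff_seq_limit.1 hw2
    have hy : ∀ n, ∃ y, y ∈ K ∧ 0 < ⟪b n, y⟫ := by
      intro n
      obtain ⟨hbS, hbD⟩ := hb n
      by_contra hcon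
      push_neg at hcon
      exact hbD ⟨hbS, fun y hy => hcon y hy⟩
    choose y hyK hypos using hy
    have hKcompact : IsCompact K :=
      (isCompact_sphere (0 : Euc m) 1).of_isClosed_subset hKclosed hKsub
    obtain ⟨x, hxK, φ, hφmono, hφlim⟩ := hKcompact.tendsto_subseq hyK
    have hxnorm : ‖x‖ = 1 := by
      have := hKsub hxK
      rwa [unitSphere, mem_sphere_zero_iff_norm] at this
    have hblim' : Tendsto (fun n => b (φ n)) atTop (nhds w) :=
      hblim.comp hφmono.tendsto_atTop
    have hinnerlim : Tendsto (fun n => ⟪b (φ n), y (φ n)⟫) atTop (nhds ⟪w, x⟫) :=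
      hblim'.inner hφlim
    have hge : (0:ℝ) ≤ ⟪w, x⟫ :=
      ge_of_tendsto' hinnerlim fun n => le_of_lt (hypos (φ n))
    have hle : ⟪w, x⟫ ≤ 0 := hwD.2 x hxK
    have hwx : ⟪w, x⟫ = 0 := le_antisymm hle hge
    refine ⟨-w, by rw [neg_neg], ?_, x, ⟨subset_closure hxK, ?_⟩, ?_, ?_⟩
    · rw [unitSphere, mem_sphere_zero_iff_norm, norm_neg]; exact hwnorm
    · exact mem_closure_sphere_diff hxnorm hwnorm
        (by rw [real_inner_comm]; exact hwx) (fun y hy => hwD.2 y hy)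
    · rw [inner_neg_left, hwx, neg_zero]
    · intro z hz
      rw [inner_neg_left]
      linarith [hwD.2 z hz]
end

section
/- Let A = (a_1,…,a_n) ∈ (S^m)^n be strictly feasible and set K := −sconv{a_1,…,a_n}. Then for every a ∈ S^m: (i) a ∉ K if and only if (a_1,…,a_n,a) ∈ (S^m)^{n+1} is strictly feasible, and (ii) a ∈ ∂K if and only if (a_1,…,a_n,a) is ill-posed, i.e., (a_1,…,a_n,a) ∈ Σ_{n+1,m}. -/
open MeasureTheory Real Set Filter
open scoped ENNReal NNReal BigOperators RealInnerProductSpace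

noncomputable section AuxSection
section Aux

open scoped RealInnerProductSpace

variable {m n : ℕ}

lemma mem_unitSphere_iff {x : Euc m} : x ∈ unitSphere m ↔ ‖x‖ = 1 := by
  simp [unitSphere, mem_sphere_zero_iff_norm]

/-- Nonnegative combinations of a fixed finite family. -/
def coneN {m n : ℕ} (v : Fin n → Euc m) : Set (Euc m) :=
  {x | ∃ c : Fin n → ℝ, (∀ i, 0 ≤ c i) ∧ x = ∑ i, c i • v i}

lemma zero_mem_coneN (v : Fin n → Euc m) : (0 : Euc m) ∈ coneN v :=
  ⟨0, fun _ => le_refl 0, by simp⟩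

lemma mem_coneN_self (v : Fin n → Euc m) (i : Fin n) : v i ∈ coneN v := by
  classical
  refine ⟨fun j => if j = i then 1 else 0, fun j => by positivity, ?_⟩
  simp [ite_smul, Finset.sum_ite_eq']

lemma coneGen_range_eq (A : Fin n → Euc m) : coneGen (Set.range A) = coneN A := by
  classical
  ext x
  constructor
  · rintro ⟨k, c, v, hc, hv, rfl⟩
    choose idx hidx using fun j => (hv j : v j ∈ Set.range A)
    refine ⟨fun i => ∑ j ∈ Finset.univ.filter (fun j => idx j = i), c j,
      fun i => Finset.sum_nonneg fun j _ => hc j, ?_⟩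
    have : ∀ i : Fin n, (∑ j ∈ Finset.univ.filter (fun j => idx j = i), c j) • A i
        = ∑ j ∈ Finset.univ.filter (fun j => idx j = i), c j • v j := by
      intro i
      rw [Finset.sum_smul]
      refine Finset.sum_congr rfl fun j hj => ?_
      rw [Finset.mem_filter] at hj
      rw [← hj.2, hidx j]
    rw [Finset.sum_congr rfl (fun i _ => this i),
      Finset.sum_fiberwise_of_maps_to (fun j _ => Finset.mem_univ (idx j))]
  · rintro ⟨c, hc, rfl⟩
    exact ⟨n, c, A, hc, fun j => Set.mem_range_self j, rfl⟩

/-- The linear map sending coefficients to the corresponding combination. -/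
def combMap {m n : ℕ} (v : Fin n → Euc m) : (Fin n → ℝ) →ₗ[ℝ] Euc m where
  toFun c := ∑ i, c i • v i
  map_add' c d := by simp [add_smul, Finset.sum_add_distrib]
  map_smul' t c := by simp [Finset.smul_sum, smul_smul]

lemma coneN_isClosed : ∀ {n : ℕ} (v : Fin n → Euc m), IsClosed (coneN v) := by
  intro n
  induction n with
  | zero =>
    intro v
    have : coneN v = {0} := by
      ext x
      simp only [coneN, Set.mem_setOf_eq, Set.mem_singleton_iff]
      constructor
      · rintro ⟨c, -, rfl⟩; simp
      · rintro rfl; exact zero_mem_coneN v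
    rw [this]; exact isClosed_singleton
  | succ k ih =>
    intro v
    by_cases hind : LinearIndependent ℝ v
    · -- the combination map is a closed embedding
      have hker : LinearMap.ker (combMap v) = ⊥ := by
        rw [LinearMap.ker_eq_bot']
        intro c hc
        funext i
        exact Fintype.linearIndependent_iff.1 hind c hc i
      have hemb := LinearMap.isClosedEmbedding_of_injective (f := combMap v) hker
      have horth : IsClosed {c : Fin (k+1) → ℝ | ∀ i, 0 ≤ c i} := by
        have : {c : Fin (k+1) → ℝ | ∀ i, 0 ≤ c i} = ⋂ i, {c | 0 ≤ c i} := by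
          ext c; simp
        rw [this]
        exact isClosed_iInter fun i => isClosed_le continuous_const (continuous_apply i)
      have : coneN v = combMap v '' {c : Fin (k+1) → ℝ | ∀ i, 0 ≤ c i} := by
        ext x
        constructor
        · rintro ⟨c, hc, rfl⟩; exact ⟨c, hc, rfl⟩
        · rintro ⟨c, hc, rfl⟩; exact ⟨c, hc, rfl⟩
      rw [this]
      exact hemb.isClosedMap _ horth
    · -- there is a dependence relation with a positive coefficient
      classical
      rw [Fintype.linearIndependent_iff] at hind
      push_neg at hind
      obtain ⟨d, hd0, i₀, hdi₀⟩ := hind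
      obtain ⟨e, he0, j₀, hj₀⟩ : ∃ e : Fin (k+1) → ℝ,
          (∑ i, e i • v i) = 0 ∧ ∃ j, 0 < e j := by
        rcases hdi₀.lt_or_gt with h | h
        · exact ⟨-d, by simpa using hd0, i₀, by simpa using h⟩
        · exact ⟨d, hd0, i₀, h⟩
      have key : coneN v = ⋃ (j : Fin (k+1)) (_ : 0 < e j), coneN (v ∘ j.succAbove) := by
        ext x
        simp only [Set.mem_iUnion]
        constructor
        · rintro ⟨c, hc, rfl⟩
          set T : Finset (Fin (k+1)) := Finset.univ.filter (fun j => 0 < e j) with hT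
          have hTne : T.Nonempty := ⟨j₀, by simp [hT, hj₀]⟩
          obtain ⟨js, hjsT, hjs⟩ := Finset.exists_mem_eq_inf' hTne (fun j => c j / e j)
          set t : ℝ := T.inf' hTne (fun j => c j / e j) with htdef
          have hjspos : 0 < e js := by
            have := hjsT; rw [hT, Finset.mem_filter] at this; exact this.2
          have ht0 : 0 ≤ t := by
            apply Finset.le_inf'
            intro b hb
            rw [hT, Finset.mem_filter] at hb
            exact div_nonneg (hc b) hb.2.le
          set c' : Fin (k+1) → ℝ := fun i => c i - t * e i with hc'def
          have hc' : ∀ i, 0 ≤ c' i := by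
            intro i
            rcases le_or_gt (e i) 0 with h | h
            · have : t * e i ≤ 0 := mul_nonpos_iff.2 (Or.inl ⟨ht0, h⟩)
              simp only [hc'def]
              linarith [hc i]
            · have hiT : i ∈ T := by rw [hT, Finset.mem_filter]; exact ⟨Finset.mem_univ i, h⟩
              have := Finset.inf'_le (fun j => c j / e j) hiT
              rw [← htdef] at this
              have : t * e i ≤ c i := (le_div_iff₀ h).1 this
              simp only [hc'def]; linarith
          have hc'js : c' js = 0 := by
            simp only [hc'def, hjs]
            field_simp
            ring
          have hsum : ∑ i, c i • v i = ∑ i, c' i • v i := by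
            simp only [hc'def, sub_smul, mul_smul, Finset.sum_sub_distrib, ← Finset.smul_sum, he0,
              smul_zero, sub_zero]
          refine ⟨js, hjspos, fun i => c' (js.succAbove i), fun i => hc' _, ?_⟩
          rw [hsum, Fin.sum_univ_succAbove (fun i => c' i • v i) js, hc'js, zero_smul, zero_add]
          rfl
        · rintro ⟨j, hj, c, hc, rfl⟩
          set c' : Fin (k+1) → ℝ := j.insertNth (0:ℝ) c with hc'def
          refine ⟨c', ?_, ?_⟩
          · intro i
            refine Fin.succAboveCases j ?_ ?_ i
            · simp [hc'def]
            · intro l; simpa [hc'def] using hc l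
          · rw [Fin.sum_univ_succAbove (fun i => c' i • v i) j]
            simp [hc'def]
      rw [key]
      exact isClosed_iUnion_of_finite fun j =>
        isClosed_iUnion_of_finite fun _ => ih (v ∘ j.succAbove)

/-- `coneN A` as a convex cone. -/
def coneNCone (A : Fin n → Euc m) : ConvexCone ℝ (Euc m) where
  carrier := coneN A
  smul_mem' := by
    rintro t ht x ⟨c, hc, rfl⟩
    exact ⟨fun i => t * c i, fun i => mul_nonneg ht.le (hc i), by
      rw [Finset.smul_sum]; simp [smul_smul]⟩
  add_mem' := by
    rintro x ⟨c, hc, rfl⟩ y ⟨d, hd, rfl⟩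
    exact ⟨fun i => c i + d i, fun i => add_nonneg (hc i) (hd i), by
      simp [add_smul, Finset.sum_add_distrib]⟩

lemma inner_nonpos_of_mem_coneN {A : Fin n → Euc m} {x : Euc m}
    (hx : ∀ i, ⟪A i, x⟫ ≤ 0) {y : Euc m} (hy : y ∈ coneN A) : ⟪y, x⟫ ≤ 0 := by
  obtain ⟨c, hc, rfl⟩ := hy
  rw [sum_inner]
  refine Finset.sum_nonpos fun i _ => ?_
  rw [real_inner_smul_left]
  exact mul_nonpos_iff.2 (Or.inl ⟨hc i, hx i⟩)

lemma memK_iff {A : Fin n → Euc m} {a : Euc m} (ha : a ∈ unitSphere m) :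
    a ∈ Neg.neg '' sconv (Set.range A) ↔ -a ∈ coneN A := by
  rw [← coneGen_range_eq]
  constructor
  · rintro ⟨y, ⟨hy1, _⟩, rfl⟩
    rwa [neg_neg]
  · intro h
    refine ⟨-a, ⟨h, ?_⟩, neg_neg a⟩
    rw [mem_unitSphere_iff] at ha ⊢
    simpa using ha

/-- If all inner products are strictly negative at a sphere point, the system is
strictly feasible. -/
lemma strictlyFeasible_of_neg {k : ℕ} {B : Fin k → Euc m}
    (hB : ∀ i, B i ∈ unitSphere m) {x : Euc m} (hx : x ∈ unitSphere m)
    (h : ∀ i, ⟪B i, x⟫ < 0) : StrictlyFeasible B := by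
  have hε : ∃ ε > (0:ℝ), ∀ i, ⟪B i, x⟫ ≤ -ε := by
    cases isEmpty_or_nonempty (Fin k) with
    | inl hempty => exact ⟨1, one_pos, fun i => isEmptyElim i⟩
    | inr hne =>
      refine ⟨Finset.univ.inf' Finset.univ_nonempty (fun i => -⟪B i, x⟫), ?_, ?_⟩
      · obtain ⟨i, -, hi⟩ := Finset.exists_mem_eq_inf' Finset.univ_nonempty
          (fun i => -⟪B i, x⟫)
        rw [hi]; linarith [h i]
      · intro i
        have := Finset.inf'_le (fun i => -⟪B i, x⟫) (Finset.mem_univ i)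
        linarith
  obtain ⟨ε, hε0, hεle⟩ := hε
  refine ⟨x, ⟨hx, fun i => (h i).le⟩, ε, hε0, fun y hy hdist => ⟨hy, fun i => ?_⟩⟩
  have h1 : ⟪B i, y⟫ = ⟪B i, x⟫ + ⟪B i, y - x⟫ := by
    rw [← inner_add_right]; congr 1; abel
  have h2 : ⟪B i, y - x⟫ ≤ ‖y - x‖ := by
    calc ⟪B i, y - x⟫ ≤ ‖B i‖ * ‖y - x‖ := real_inner_le_norm _ _
    _ = ‖y - x‖ := by rw [mem_unitSphere_iff.1 (hB i), one_mul]
  have h3 : ‖y - x‖ < ε := by rwa [← dist_eq_norm]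
  have := hεle i
  linarith

/-- A strictly feasible system of unit vectors admits a point where all inner
products are strictly negative. -/
lemma exists_neg_of_strictlyFeasible {k : ℕ} {B : Fin k → Euc m}
    (hB : ∀ i, B i ∈ unitSphere m) (h : StrictlyFeasible B) :
    ∃ x ∈ unitSphere m, ∀ i, ⟪B i, x⟫ < 0 := by
  obtain ⟨x, ⟨hxS, hxSol⟩, ε, hε, hball⟩ := h
  refine ⟨x, hxS, fun i => ?_⟩
  rcases lt_or_eq_of_le (hxSol i) with h | h
  · exact h
  exfalso
  -- perturb x in the direction of B i
  have hxnorm : ‖x‖ = 1 := mem_unitSphere_iff.1 hxS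
  set g : ℝ → Euc m := fun t => ‖x + t • B i‖⁻¹ • (x + t • B i) with hg
  have hg0 : g 0 = x := by simp [hg, hxnorm]
  have hcont : ContinuousAt g 0 := by
    have h1 : Continuous fun t : ℝ => x + t • B i := by continuity
    have h2 : ContinuousAt (fun t : ℝ => ‖x + t • B i‖⁻¹) 0 := by
      apply ContinuousAt.inv₀ (h1.norm.continuousAt)
      simp [hxnorm]
    exact h2.smul h1.continuousAt
  have := hcont.tendsto
  rw [hg0, Metric.tendsto_nhds] at this
  have hev := this ε hε
  rw [Metric.eventually_nhds_iff] at hev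
  obtain ⟨δ, hδ, hδball⟩ := hev
  set t : ℝ := δ / 2 with htdef
  have ht : 0 < t := by positivity
  have hxB : ⟪x, B i⟫ = 0 := by rw [real_inner_comm]; exact h
  have hip : ⟪x, x + t • B i⟫ = 1 := by
    rw [inner_add_right, real_inner_smul_right, hxB,
      real_inner_self_eq_norm_sq, hxnorm]
    ring
  have hne : x + t • B i ≠ 0 := by
    intro hzero
    rw [hzero, inner_zero_right] at hip
    norm_num at hip
  have hgt : g t ∈ unitSphere m := by
    rw [mem_unitSphere_iff, hg]
    simp only [norm_smul, norm_inv, norm_norm]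
    exact inv_mul_cancel₀ (norm_ne_zero_iff.2 hne)
  have hdist : dist (g t) x < ε := by
    apply hδball
    rw [dist_zero_right, Real.norm_eq_abs, abs_of_pos ht]
    linarith
  have hsol := hball (g t) hgt hdist
  have hle := hsol.2 i
  have hBi : ‖B i‖ = 1 := mem_unitSphere_iff.1 (hB i)
  have : ⟪B i, g t⟫ = ‖x + t • B i‖⁻¹ * t := by
    rw [hg]
    simp only [real_inner_smul_right, inner_add_right]
    rw [h, real_inner_self_eq_norm_sq, hBi]
    ring
  rw [this] at hle
  have hpos : 0 < ‖x + t • B i‖⁻¹ * t :=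
    mul_pos (inv_pos.2 (norm_pos_iff.2 hne)) ht
  linarith

lemma snoc_mem_sphere {A : Fin n → Euc m} (hA : ∀ i, A i ∈ unitSphere m)
    {a : Euc m} (ha : a ∈ unitSphere m) :
    ∀ j : Fin (n+1), (Fin.snoc (α := fun _ => Euc m) A a) j ∈ unitSphere m := by
  intro j
  refine Fin.lastCases ?_ ?_ j
  · simpa using ha
  · intro i; simpa using hA i

/-- Forward direction of (i): if `a ∉ K` then the extended system is strictly
feasible. -/
lemma strict_snoc_of_not_mem {A : Fin n → Euc m}
    (hA : ∀ i, A i ∈ unitSphere m) (hsf : StrictlyFeasible A)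
    {a : Euc m} (ha : a ∈ unitSphere m) (hnot : -a ∉ coneN A) :
    StrictlyFeasible (Fin.snoc A a) := by
  -- separate `-a` from the closed convex cone
  obtain ⟨y, hy1, hy2⟩ :=
    ProperCone.hyperplane_separation' (x₀ := -a)
      ({ carrier := coneN A
         zero_mem' := zero_mem_coneN A
         add_mem' := fun hx hy => (coneNCone A).add_mem' hx hy
         smul_mem' := by
           rintro t x ⟨d, hd, rfl⟩
           exact ⟨fun i => (t : ℝ) * d i, fun i => mul_nonneg t.2 (hd i), by
             change (t : ℝ) • (∑ i, d i • A i : Euc m) = _; rw [Finset.smul_sum]; simp [smul_smul]⟩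
         isClosed' := coneN_isClosed A } : ProperCone ℝ (Euc m)) hnot
  set z : Euc m := -y with hz
  have hzA : ∀ i, ⟪A i, z⟫ ≤ 0 := by
    intro i
    have := hy1 (A i) (mem_coneN_self A i)
    rw [hz, inner_neg_right]
    linarith
  have hza : ⟪a, z⟫ < 0 := by
    rw [real_inner_comm, inner_neg_right] at hy2
    rw [hz, inner_neg_right, real_inner_comm]
    linarith
  -- get a strictly feasible point of the original system
  obtain ⟨x₀, hx₀S, hx₀⟩ := exists_neg_of_strictlyFeasible hA hsf
  -- combine
  set P : ℝ := -⟪a, z⟫ with hP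
  have hPpos : 0 < P := by rw [hP]; linarith
  set Q : ℝ := |⟪a, x₀⟫| with hQ
  set s : ℝ := P / (2 * (Q + 1)) with hs
  have hQ0 : 0 ≤ Q := abs_nonneg _
  have hspos : 0 < s := by rw [hs]; positivity
  set w : Euc m := z + s • x₀ with hw
  have hwa : ⟪a, w⟫ < 0 := by
    rw [hw, inner_add_right, real_inner_smul_right]
    have h1 : s * ⟪a, x₀⟫ ≤ s * Q := by
      apply mul_le_mul_of_nonneg_left _ hspos.le
      rw [hQ]; exact le_abs_self _
    have h2 : s * Q ≤ s * (Q + 1) := by nlinarith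
    have h3 : s * (Q + 1) = P / 2 := by rw [hs]; field_simp
    have : ⟪a, z⟫ = -P := by rw [hP]; ring
    linarith
  have hwA : ∀ i, ⟪A i, w⟫ < 0 := by
    intro i
    rw [hw, inner_add_right, real_inner_smul_right]
    have := mul_pos hspos (neg_pos.2 (hx₀ i))
    have h2 := hzA i
    nlinarith
  have hwne : w ≠ 0 := by
    intro h0
    rw [h0, inner_zero_right] at hwa
    exact lt_irrefl 0 hwa
  set x : Euc m := ‖w‖⁻¹ • w with hx
  have hxS : x ∈ unitSphere m := by
    rw [mem_unitSphere_iff, hx]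
    simp only [norm_smul, norm_inv, norm_norm]
    exact inv_mul_cancel₀ (norm_ne_zero_iff.2 hwne)
  have hinv : 0 < ‖w‖⁻¹ := inv_pos.2 (norm_pos_iff.2 hwne)
  apply strictlyFeasible_of_neg (snoc_mem_sphere hA ha) hxS
  intro j
  refine Fin.lastCases ?_ ?_ j
  · rw [Fin.snoc_last, hx, real_inner_smul_right]
    exact mul_neg_of_pos_of_neg hinv hwa
  · intro i
    rw [Fin.snoc_castSucc, hx, real_inner_smul_right]
    exact mul_neg_of_pos_of_neg hinv (hwA i)

end Aux

end AuxSection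

/-- For a strictly feasible `A` and `K = -sconv{a_1,…,a_n}`:
`a ∉ K` iff `(A,a)` is strictly feasible, and `a ∈ ∂K` iff `(A,a)` is
ill-posed. -/
theorem extension_characterization (m n : ℕ) (A : Fin n → Euc m)
    (hA : ∀ i, A i ∈ unitSphere m) (hsf : StrictlyFeasible A)
    (a : Euc m) (ha : a ∈ unitSphere m) :
    (a ∉ Neg.neg '' sconv (Set.range A) ↔ StrictlyFeasible (Fin.snoc A a)) ∧
    (a ∈ sphBoundary (Neg.neg '' sconv (Set.range A)) ↔
      Fin.snoc A a ∈ illPosed m (n + 1)) := by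
  classical
  set K : Set (Euc m) := Neg.neg '' sconv (Set.range A) with hK
  have hKsubset : ∀ {x : Euc m}, (∀ i, ⟪A i, x⟫ ≤ 0) → ∀ y ∈ K, 0 ≤ ⟪y, x⟫ := by
    rintro x hx y ⟨z, ⟨hz1, hz2⟩, rfl⟩
    have := inner_nonpos_of_mem_coneN hx ((coneGen_range_eq A) ▸ hz1)
    rw [inner_neg_left]
    linarith
  have part1 : a ∉ K ↔ StrictlyFeasible (Fin.snoc A a) := by
    constructor
    · intro hnot
      exact strict_snoc_of_not_mem hA hsf ha (fun hmem => hnot ((memK_iff ha).2 hmem))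
    · intro hstrict hmem
      obtain ⟨x, hxS, hx⟩ :=
        exists_neg_of_strictlyFeasible (snoc_mem_sphere hA ha) hstrict
      have hxA : ∀ i, ⟪A i, x⟫ < 0 := fun i => by simpa using hx i.castSucc
      have hxa : ⟪a, x⟫ < 0 := by simpa using hx (Fin.last n)
      have h1 : ⟪-a, x⟫ ≤ 0 :=
        inner_nonpos_of_mem_coneN (fun i => (hxA i).le) ((memK_iff ha).1 hmem)
      rw [inner_neg_left] at h1
      linarith
  refine ⟨part1, ?_⟩
  constructor
  · -- boundary point gives ill-posed instance
    intro hbd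
    have hcl : a ∈ closure K := hbd.1
    have hclc : a ∈ closure (unitSphere m \ K) := hbd.2
    refine ⟨snoc_mem_sphere hA ha, ?_, ?_⟩
    · -- feasibility via compactness
      rw [mem_closure_iff_seq_limit] at hclc
      obtain ⟨b, hb, hbtend⟩ := hclc
      have hstrict : ∀ k : ℕ, StrictlyFeasible (Fin.snoc A (b k)) := fun k =>
        strict_snoc_of_not_mem hA hsf (hb k).1
          (fun hmem => (hb k).2 ((memK_iff (hb k).1).2 hmem))
      choose x hxS hx using fun k =>
        exists_neg_of_strictlyFeasible (snoc_mem_sphere hA (hb k).1) (hstrict k)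
      have hcompact : IsCompact (unitSphere m) := isCompact_sphere 0 1
      obtain ⟨xl, hxlS, φ, hφ, hxtend⟩ := hcompact.tendsto_subseq hxS
      refine ⟨xl, hxlS, fun j => ?_⟩
      refine Fin.lastCases ?_ ?_ j
      · rw [Fin.snoc_last]
        have htt : Tendsto (fun k => ⟪b (φ k), x (φ k)⟫) atTop (nhds ⟪a, xl⟫) :=
          (hbtend.comp hφ.tendsto_atTop).inner hxtend
        refine le_of_tendsto htt (Filter.Eventually.of_forall fun k => ?_)
        simpa using (hx (φ k) (Fin.last n)).le
      · intro i
        rw [Fin.snoc_castSucc]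
        have htt : Tendsto (fun k => ⟪A i, x (φ k)⟫) atTop (nhds ⟪A i, xl⟫) :=
          tendsto_const_nhds.inner hxtend
        refine le_of_tendsto htt (Filter.Eventually.of_forall fun k => ?_)
        simpa using (hx (φ k) i.castSucc).le
    · -- not strictly feasible
      intro hstrict
      obtain ⟨x, hxS, hx⟩ :=
        exists_neg_of_strictlyFeasible (snoc_mem_sphere hA ha) hstrict
      have hxA : ∀ i, ⟪A i, x⟫ ≤ 0 := fun i => (by simpa using hx i.castSucc : _ < (0:ℝ)).le
      have hxa : ⟪a, x⟫ < 0 := by simpa using hx (Fin.last n)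
      have hclosed : IsClosed {y : Euc m | 0 ≤ ⟪y, x⟫} :=
        isClosed_le continuous_const (continuous_id.inner continuous_const)
      have hsub : closure K ⊆ {y : Euc m | 0 ≤ ⟪y, x⟫} :=
        closure_minimal (fun y hy => hKsubset hxA y hy) hclosed
      have := hsub hcl
      simp only [Set.mem_setOf_eq] at this
      linarith
  · -- ill-posed gives boundary point
    rintro ⟨-, hfeas, hnstrict⟩
    have hmem : a ∈ K := by
      by_contra hnot
      exact hnstrict (part1.1 hnot)
    refine ⟨subset_closure hmem, ?_⟩
    obtain ⟨x, hxS, hxSol⟩ := hfeas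
    have hxA : ∀ i, ⟪A i, x⟫ ≤ 0 := fun i => by simpa using hxSol i.castSucc
    have hxa : ⟪a, x⟫ ≤ 0 := by simpa using hxSol (Fin.last n)
    have hxa0 : ⟪a, x⟫ = 0 := le_antisymm hxa (hKsubset hxA a hmem)
    have hanorm : ‖a‖ = 1 := mem_unitSphere_iff.1 ha
    have hxnorm : ‖x‖ = 1 := mem_unitSphere_iff.1 hxS
    set g : ℝ → Euc m := fun t => ‖a - t • x‖⁻¹ • (a - t • x) with hg
    have key : ∀ t : ℝ, 0 < t → g t ∈ unitSphere m \ K := by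
      intro t ht
      have hip : ⟪a, a - t • x⟫ = 1 := by
        rw [inner_sub_right, real_inner_smul_right, hxa0,
          real_inner_self_eq_norm_sq, hanorm]
        ring
      have hne : a - t • x ≠ 0 := by
        intro hzero
        rw [hzero, inner_zero_right] at hip
        norm_num at hip
      have hgS : g t ∈ unitSphere m := by
        rw [mem_unitSphere_iff, hg]
        simp only [norm_smul, norm_inv, norm_norm]
        exact inv_mul_cancel₀ (norm_ne_zero_iff.2 hne)
      refine ⟨hgS, fun hgK => ?_⟩
      have h1 : 0 ≤ ⟪g t, x⟫ := hKsubset hxA _ hgK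
      have h2 : ⟪g t, x⟫ = -(‖a - t • x‖⁻¹ * t) := by
        rw [hg]
        simp only [real_inner_smul_left, inner_sub_left, real_inner_smul_left]
        rw [hxa0, real_inner_self_eq_norm_sq, hxnorm]
        ring
      have h3 : 0 < ‖a - t • x‖⁻¹ * t :=
        mul_pos (inv_pos.2 (norm_pos_iff.2 hne)) ht
      rw [h2] at h1
      linarith
    have hg0 : g 0 = a := by simp [hg, hanorm]
    have hcont : ContinuousAt g 0 := by
      have h1 : Continuous fun t : ℝ => a - t • x :=
        continuous_const.sub (continuous_id.smul continuous_const)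
      have h2 : ContinuousAt (fun t : ℝ => ‖a - t • x‖⁻¹) 0 := by
        apply ContinuousAt.inv₀ (h1.norm.continuousAt)
        simp [hanorm]
      exact h2.smul h1.continuousAt
    have htends : Tendsto (fun k : ℕ => g (1 / (k + 1))) atTop (nhds a) := by
      rw [← hg0]
      exact hcont.tendsto.comp tendsto_one_div_add_atTop_nhds_zero_nat
    refine mem_closure_of_tendsto htends (Filter.Eventually.of_forall fun k => ?_)
    refine key _ ?_
    positivity
end

section
/- Let A = (a_1,…,a_n) ∈ (S^m)^n be strictly feasible, let C := {x ∈ S^m : ⟨a_i,x⟩ ≤ 0 for all i} be its set of solutions, and set K := −sconv{a_1,…,a_n}. If b ∈ K \ ∂K, then sin d(b,∂K) ≤ ⟨b,q⟩ for every q ∈ C; in particular sin d(b,∂K) ≤ min_{x∈C} ⟨b,x⟩. -/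
open MeasureTheory Real Set Filter
open scoped ENNReal NNReal BigOperators RealInnerProductSpace

lemma inner_nonneg_of_memK {m n : ℕ} (A : Fin n → Euc m) (q : Euc m)
    (hq : q ∈ Sol A) (k : Euc m) (hk : k ∈ Neg.neg '' sconv (Set.range A)) :
    0 ≤ ⟪k, q⟫ := by
  obtain ⟨y, ⟨hy1, _⟩, rfl⟩ := hk
  obtain ⟨kk, cc, vv, hc, hv, rfl⟩ := hy1
  have : ⟪(-∑ j, cc j • vv j : Euc m), q⟫ = -∑ j, cc j * ⟪vv j, q⟫ := by
    rw [inner_neg_left, sum_inner]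
    congr 1
    exact Finset.sum_congr rfl fun j _ => real_inner_smul_left _ _ _
  rw [this, neg_nonneg]
  apply Finset.sum_nonpos
  intro j _
  obtain ⟨i, hi⟩ := hv j
  exact mul_nonpos_of_nonneg_of_nonpos (hc j) (hi ▸ hq.2 i)

/-- For strictly feasible `A` with solution set `C` and
`K = -sconv{a_1,…,a_n}`: if `b ∈ K \ ∂K` then `sin d(b,∂K) ≤ ⟨b,q⟩` for every
`q ∈ C`. -/
theorem sin_dist_boundary_le_inner (m n : ℕ) (A : Fin n → Euc m)
    (hA : ∀ i, A i ∈ unitSphere m) (hsf : StrictlyFeasible A)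
    (b : Euc m)
    (hb : b ∈ Neg.neg '' sconv (Set.range A) \
      sphBoundary (Neg.neg '' sconv (Set.range A))) :
    ∀ q ∈ Sol A,
      Real.sin (angdistSet b (sphBoundary (Neg.neg '' sconv (Set.range A)))) ≤
        ⟪b, q⟫ := by
  intro q hq
  set K : Set (Euc m) := Neg.neg '' sconv (Set.range A) with hK
  have hbK : b ∈ K := hb.1
  have hbS : b ∈ unitSphere m := by
    obtain ⟨y, ⟨_, hy2⟩, rfl⟩ := hbK
    simpa [unitSphere, mem_sphere_zero_iff_norm] using
      (mem_sphere_zero_iff_norm.mp hy2)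
  have hbnorm : ‖b‖ = 1 := mem_sphere_zero_iff_norm.mp hbS
  have hqnorm : ‖q‖ = 1 := mem_sphere_zero_iff_norm.mp hq.1
  have hbb : ⟪b, b⟫ = 1 := by
    rw [real_inner_self_eq_norm_mul_norm, hbnorm]; ring
  have hqq : ⟪q, q⟫ = 1 := by
    rw [real_inner_self_eq_norm_mul_norm, hqnorm]; ring
  set c : ℝ := ⟪b, q⟫ with hcdef
  have hc0 : 0 ≤ c := inner_nonneg_of_memK A q hq b hbK
  have hc1 : c ≤ 1 := by
    have := real_inner_le_norm b q
    rwa [hbnorm, hqnorm, one_mul] at this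
  -- the halfspace containing closure K
  have hhalf : closure K ⊆ {x : Euc m | 0 ≤ ⟪x, q⟫} := by
    apply closure_minimal
    · intro k hk; exact inner_nonneg_of_memK A q hq k hk
    · exact isClosed_le continuous_const (continuous_id.inner continuous_const)
  rcases eq_or_lt_of_le hc1 with hceq | hclt
  · exact le_trans (Real.sin_le_one _) hceq.ge
  -- main case : c < 1
  set s : ℝ := Real.sqrt (1 - c ^ 2) with hsdef
  have hs2 : s ^ 2 = 1 - c ^ 2 := Real.sq_sqrt (by nlinarith)
  have hs : 0 < s := Real.sqrt_pos.mpr (by nlinarith)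
  set q' : Euc m := s⁻¹ • (q - c • b) with hq'def
  have hbq' : ⟪b, q'⟫ = 0 := by
    rw [hq'def, real_inner_smul_right, inner_sub_right, real_inner_smul_right, hbb]
    ring
  have hqb : ⟪q, b⟫ = c := by rw [real_inner_comm]
  have hq'b : ⟪q', b⟫ = 0 := by rw [real_inner_comm]; exact hbq'
  have hq'q : ⟪q', q⟫ = s := by
    simp only [hq'def, real_inner_smul_left, inner_sub_left, hqq, ← hcdef]
    have h1 : 1 - c * c = s * s := by nlinarith
    rw [h1]
    field_simp
  have hq'q' : ⟪q', q'⟫ = 1 := by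
    simp only [hq'def, real_inner_smul_left, real_inner_smul_right, inner_sub_left,
      inner_sub_right, hbb, hqq, hqb, ← hcdef]
    have h1 : 1 - c * c = s * s := by nlinarith
    field_simp
    nlinarith
  set x : ℝ → Euc m := fun t => Real.cos t • b - Real.sin t • q' with hxdef
  have hxcont : Continuous x := by
    exact (Real.continuous_cos.smul continuous_const).sub (Real.continuous_sin.smul continuous_const)
  have hxq : ∀ t, ⟪x t, q⟫ = Real.cos t * c - Real.sin t * s := by
    intro t
    rw [hxdef]
    simp only [inner_sub_left, real_inner_smul_left, hq'q, ← hcdef]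
  have hbx : ∀ t, ⟪b, x t⟫ = Real.cos t := by
    intro t
    rw [hxdef]
    simp only [inner_sub_right, real_inner_smul_right, hbb, hbq']
    ring
  have hxS : ∀ t, x t ∈ unitSphere m := by
    intro t
    have hxx : ⟪x t, x t⟫ = 1 := by
      rw [hxdef]
      simp only [inner_sub_left, inner_sub_right, real_inner_smul_left,
        real_inner_smul_right, hbb, hq'q', hbq', hq'b]
      linear_combination Real.sin_sq_add_cos_sq t
    have : ‖x t‖ = 1 := by
      rw [norm_eq_sqrt_real_inner, hxx, Real.sqrt_one]
    simpa [unitSphere, mem_sphere_zero_iff_norm] using this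
  have hx0 : x 0 = b := by simp [hxdef]
  -- the set of times staying in closure K
  set T : Set ℝ := Icc 0 (Real.pi / 2) ∩ x ⁻¹' closure K with hTdef
  have hTclosed : IsClosed T :=
    isClosed_Icc.inter (isClosed_closure.preimage hxcont)
  have hT0 : (0 : ℝ) ∈ T := by
    constructor
    · exact ⟨le_refl 0, by positivity⟩
    · simp only [Set.mem_preimage, hx0]; exact subset_closure hbK
  have hTbdd : BddAbove T := BddAbove.mono (Set.inter_subset_left) bddAbove_Icc
  set t₀ : ℝ := sSup T with ht₀def
  have ht₀T : t₀ ∈ T := hTclosed.csSup_mem ⟨0, hT0⟩ hTbdd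
  have ht₀0 : 0 ≤ t₀ := ht₀T.1.1
  have hpi2 : (Real.pi / 2) ∉ T := by
    intro hmem
    have h1 : 0 ≤ ⟪x (Real.pi / 2), q⟫ := hhalf hmem.2
    rw [hxq, Real.cos_pi_div_two, Real.sin_pi_div_two] at h1
    nlinarith
  have ht₀lt : t₀ < Real.pi / 2 :=
    lt_of_le_of_ne ht₀T.1.2 (fun h => hpi2 (h ▸ ht₀T))
  -- x t₀ is in the boundary of K
  have hxt₀bd : x t₀ ∈ sphBoundary K := by
    constructor
    · exact ht₀T.2
    · -- x maps Ioc t₀ (π/2) into unitSphere \ K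
      have himg : x '' Set.Ioc t₀ (Real.pi / 2) ⊆ unitSphere m \ K := by
        rintro _ ⟨t, ht, rfl⟩
        refine ⟨hxS t, fun hxtK => ?_⟩
        have : t ∈ T := ⟨⟨le_trans ht₀0 ht.1.le, ht.2⟩, subset_closure hxtK⟩
        exact absurd (le_csSup hTbdd this) (not_le.mpr ht.1)
      have hmem : x t₀ ∈ x '' closure (Set.Ioc t₀ (Real.pi / 2)) := by
        refine ⟨t₀, ?_, rfl⟩
        rw [closure_Ioc (ne_of_lt ht₀lt)]
        exact ⟨le_refl _, ht₀lt.le⟩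
      have := (image_closure_subset_closure_image hxcont) hmem
      exact closure_mono himg this
  -- distance bound
  set δ : ℝ := angdistSet b (sphBoundary K) with hδdef
  have hbdset : BddBelow (angdist b '' sphBoundary K) := by
    refine ⟨0, fun y hy => ?_⟩
    obtain ⟨z, _, rfl⟩ := hy
    exact Real.arccos_nonneg _
  have hδ0 : 0 ≤ δ := by
    apply le_csInf ⟨_, Set.mem_image_of_mem _ hxt₀bd⟩
    rintro y ⟨z, _, rfl⟩
    exact Real.arccos_nonneg _
  have hδle : δ ≤ t₀ := by
    have h1 : δ ≤ angdist b (x t₀) :=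
      csInf_le hbdset (Set.mem_image_of_mem _ hxt₀bd)
    have h2 : angdist b (x t₀) = t₀ := by
      rw [angdist, hbx, Real.arccos_cos ht₀0 (le_trans ht₀lt.le (by linarith [Real.pi_pos]))]
    linarith
  -- the angle φ = arccos c
  set φ : ℝ := Real.arccos c with hφdef
  have hcosφ : Real.cos φ = c := Real.cos_arccos (by linarith) hc1
  have hsinφ : Real.sin φ = s := by
    rw [hφdef, Real.sin_arccos, hsdef]
  have hφ0 : 0 ≤ φ := Real.arccos_nonneg _
  have hφpi : φ ≤ Real.pi := Real.arccos_le_pi _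
  -- cos (t₀ + φ) ≥ 0
  have hcos_add : 0 ≤ Real.cos (t₀ + φ) := by
    have h1 : 0 ≤ ⟪x t₀, q⟫ := hhalf ht₀T.2
    rw [hxq] at h1
    rw [Real.cos_add, hcosφ, hsinφ]
    linarith
  have ht₀φ : t₀ + φ ≤ Real.pi / 2 := by
    by_contra h
    push_neg at h
    have := Real.cos_neg_of_pi_div_two_lt_of_lt h (by linarith)
    linarith
  -- conclude
  have hδle2 : δ ≤ Real.pi / 2 - φ := by linarith
  have : Real.sin δ ≤ Real.sin (Real.pi / 2 - φ) := by
    apply Real.strictMonoOn_sin.monotoneOn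
    · constructor <;> [linarith [Real.pi_pos]; linarith]
    · constructor <;> [linarith; linarith]
    · exact hδle2
  rwa [Real.sin_pi_div_two_sub, hcosφ] at this
end
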